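/- arXiv:2504.13832 — 6 statements merged into one kernel-verified Lean document; each statement's English description precedes it below -/
import Mathlib

section
/- Let n ≥ 2 and m ≥ 1 be integers, let X : ℝⁿ → ℝⁿ be a polynomial vector field of degree m, and let B ⊂ ℝⁿ be a closed ball centered at the origin. Then for every ε > 0 there exist a polynomial vector field X̃ : ℝⁿ → ℝⁿ of degree at most m with sup_{x ∈ B} ‖X̃(x) − X(x)‖ < ε, a point p ∈ ℝⁿ \ B with X̃(p) ≠ 0, and an affine hyperplane Σ ⊂ ℝⁿ such that the straight line {p + λ·X̃(p) : λ ∈ ℝ} is contained in Σ and Σ ∩ B = ∅. -/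
/-!
Perturb the `j`-th component by `δ xᵢᵐ`, with `δ` small and chosen so that `xᵢᵐ` has a nonzero
coefficient in the restriction of the new `j`-th component to the `xᵢ`-axis. Along that axis the
`j`-th component then has exact growth `tᵐ` and dominates the `i`-th one, so at `p = t eᵢ` with
`v = X̃(p)` the hyperplane `vⱼ yᵢ - vᵢ yⱼ = t vⱼ` contains the line `p + ℝ v`, while on the ball
`|vⱼ yᵢ - vᵢ yⱼ| ≤ R (|vᵢ| + |vⱼ|) = O(tᵐ)`, which is smaller than `|t vⱼ|` for large `t`.
-/

open Filter Asymptotics Metric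

theorem exists_abs_le_add_ne_zero (a : ℝ) {η : ℝ} (hη : 0 < η) : ∃ δ, |δ| ≤ η ∧ a + δ ≠ 0 := by
  by_cases ha : a = 0
  · exact ⟨η, (abs_of_pos hη).le, by simpa [ha] using hη.ne'⟩
  · exact ⟨0, by simpa using hη.le, by simpa using ha⟩

theorem eventually_mul_abs_add_lt_of_isBigO {u w : ℝ → ℝ} (huw : u =O[atTop] w)
    (hw : ∀ᶠ t in atTop, w t ≠ 0) (R : ℝ) :
    ∀ᶠ t in atTop, R * (|u t| + |w t|) < t * |w t| := by
  obtain ⟨c, hc⟩ := huw.bound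
  filter_upwards [hc, hw, eventually_gt_atTop (|R| * (c + 1))] with t hut hwt ht
  rw [Real.norm_eq_abs, Real.norm_eq_abs] at hut
  calc R * (|u t| + |w t|) ≤ |R| * ((c + 1) * |w t|) :=
        (mul_le_mul_of_nonneg_right (le_abs_self R) (by positivity)).trans
          (mul_le_mul_of_nonneg_left (by linarith) (abs_nonneg R))
    _ = |R| * (c + 1) * |w t| := by ring
    _ < t * |w t| := mul_lt_mul_of_pos_right ht (abs_pos.2 hwt)

theorem Polynomial.eventually_mul_abs_eval_add_lt {u w : Polynomial ℝ} {m : ℕ}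
    (hu : u.natDegree ≤ m) (hw : w.coeff m ≠ 0) (R : ℝ) :
    ∀ᶠ t in atTop, w.eval t ≠ 0 ∧ R * (|u.eval t| + |w.eval t|) < t * |w.eval t| := by
  have hw₀ : w ≠ 0 := by rintro rfl; exact hw (coeff_zero m)
  have hdeg : u.degree ≤ w.degree := by
    rw [degree_eq_natDegree hw₀]
    exact degree_le_natDegree.trans (by exact_mod_cast hu.trans (le_natDegree_of_ne_zero hw))
  have hroots := eventually_atTop_not_isRoot w hw₀
  exact hroots.and
    (eventually_mul_abs_add_lt_of_isBigO (isBigO_atTop_of_degree_le u w hdeg) hroots R)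

namespace MvPolynomial

theorem totalDegree_add_piSingle_C_mul_X_pow_le {σ ι : Type*} [DecidableEq ι]
    {X : ι → MvPolynomial σ ℝ} {m : ℕ} (hX : ∀ k, (X k).totalDegree ≤ m) (j : ι) (i : σ)
    (δ : ℝ) (k : ι) :
    ((X + Pi.single j (C δ * MvPolynomial.X i ^ m) : ι → MvPolynomial σ ℝ) k).totalDegree ≤ m := by
  refine (totalDegree_add _ _).trans (max_le (hX k) ?_)
  rcases eq_or_ne k j with rfl | h
  · rw [Pi.single_eq_same, C_mul_X_pow_eq_monomial]
    exact (totalDegree_monomial_le _ _).trans_eq (Finsupp.sum_single_index rfl)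
  · simp [h]

variable {σ : Type*} [DecidableEq σ]

theorem eval_aeval_piSingle_X (i : σ) (q : MvPolynomial σ ℝ) (t : ℝ) :
    (aeval (Pi.single i Polynomial.X) q).eval t = eval (Pi.single i t) q := by
  rw [← Polynomial.coe_aeval_eq_eval, comp_aeval_apply, aeval_eq_eval]
  congr 2
  funext j
  rcases eq_or_ne j i with rfl | h <;> simp [*]

theorem natDegree_aeval_piSingle_X_le {i : σ} {q : MvPolynomial σ ℝ} {m : ℕ}
    (hq : q.totalDegree ≤ m) :
    (aeval (Pi.single i (Polynomial.X : Polynomial ℝ)) q).natDegree ≤ m := by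
  refine (mul_one m).le.trans' (aeval_natDegree_le q hq _ fun j => ?_)
  rcases eq_or_ne j i with rfl | h <;> simp [*]

theorem eventually_mul_abs_eval_piSingle_add_lt {u w : MvPolynomial σ ℝ} {i : σ} {m : ℕ}
    (hu : u.totalDegree ≤ m)
    (hw : (aeval (Pi.single i (Polynomial.X : Polynomial ℝ)) w).coeff m ≠ 0) (R : ℝ) :
    ∀ᶠ t in atTop, eval (Pi.single i t) w ≠ 0 ∧
      R * (|eval (Pi.single i t) u| + |eval (Pi.single i t) w|) < t * |eval (Pi.single i t) w| := by
  simpa only [eval_aeval_piSingle_X] using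
    Polynomial.eventually_mul_abs_eval_add_lt (natDegree_aeval_piSingle_X_le hu) hw R

end MvPolynomial

section EuclideanSpace

variable {ι : Type*} [Fintype ι]

noncomputable def evalVectorField (X : ι → MvPolynomial ι ℝ) (x : EuclideanSpace ℝ ι) :
    EuclideanSpace ℝ ι :=
  (EuclideanSpace.equiv ι ℝ).symm fun k => MvPolynomial.eval (EuclideanSpace.equiv ι ℝ x) (X k)

omit [Fintype ι] in
@[simp]
theorem evalVectorField_apply (X : ι → MvPolynomial ι ℝ) (x : EuclideanSpace ℝ ι) (k : ι) :
    evalVectorField X x k = MvPolynomial.eval x.ofLp (X k) :=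
  rfl

theorem norm_evalVectorField_add_piSingle_sub [DecidableEq ι] (X : ι → MvPolynomial ι ℝ)
    (j : ι) (q : MvPolynomial ι ℝ) (x : EuclideanSpace ℝ ι) :
    ‖evalVectorField (X + Pi.single j q) x - evalVectorField X x‖ =
      |MvPolynomial.eval x.ofLp q| := by
  have : evalVectorField (X + Pi.single j q) x - evalVectorField X x =
      EuclideanSpace.single j (MvPolynomial.eval x.ofLp q) := by
    ext k
    rcases eq_or_ne k j with rfl | h <;> simp [*]
  rw [this, PiLp.norm_single, Real.norm_eq_abs]

theorem exists_hyperplane_through_line_disjoint_closedBall {i j : ι} (hij : i ≠ j)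
    (p v : EuclideanSpace ℝ ι) {R : ℝ} (hv : v j ≠ 0)
    (h : R * (|v i| + |v j|) < |v j * p i - v i * p j|) :
    ∃ (f : EuclideanSpace ℝ ι →ₗ[ℝ] ℝ) (c : ℝ),
      f ≠ 0 ∧ (∀ lam : ℝ, f (p + lam • v) = c) ∧ ∀ x ∈ closedBall 0 R, f x ≠ c := by
  classical
  let f : EuclideanSpace ℝ ι →ₗ[ℝ] ℝ :=
    v j • EuclideanSpace.projₗ i - v i • EuclideanSpace.projₗ j
  have hf : ∀ y, f y = v j * y i - v i * y j := fun y => rfl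
  refine ⟨f, f p, fun hf0 => hv ?_, fun lam => ?_, fun x hx hxp => ?_⟩
  · simpa [hf, hij.symm] using LinearMap.congr_fun hf0 (EuclideanSpace.single i 1)
  · rw [map_add, map_smul, hf v, smul_eq_mul]
    ring
  · have hx : ‖x‖ ≤ R := mem_closedBall_zero_iff.1 hx
    have hxi : |x i| ≤ ‖x‖ := PiLp.norm_apply_le x i
    have hxj : |x j| ≤ ‖x‖ := PiLp.norm_apply_le x j
    have hfx : |f x| ≤ R * (|v i| + |v j|) :=
      calc |f x| ≤ |v j| * |x i| + |v i| * |x j| := by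
            rw [hf, ← abs_mul, ← abs_mul]; exact abs_sub _ _
        _ ≤ |v j| * R + |v i| * R := by gcongr <;> linarith
        _ = R * (|v i| + |v j|) := by ring
    rw [hxp, hf p] at hfx
    linarith

end EuclideanSpace

theorem stmt_0_general (n m : ℕ) (hn : 2 ≤ n)
    (X : Fin n → MvPolynomial (Fin n) ℝ)
    (hX : ∀ i, (X i).totalDegree ≤ m)
    (R : ℝ) (ε : ℝ) (hε : 0 < ε) :
    ∃ X' : Fin n → MvPolynomial (Fin n) ℝ,
      (∀ i, (X' i).totalDegree ≤ m) ∧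
      (∀ x ∈ Metric.closedBall (0 : EuclideanSpace ℝ (Fin n)) R,
        ‖(EuclideanSpace.equiv (Fin n) ℝ).symm
            (fun i => MvPolynomial.eval (EuclideanSpace.equiv (Fin n) ℝ x) (X' i)) -
          (EuclideanSpace.equiv (Fin n) ℝ).symm
            (fun i => MvPolynomial.eval (EuclideanSpace.equiv (Fin n) ℝ x) (X i))‖ < ε) ∧
      ∃ p : EuclideanSpace ℝ (Fin n),
        p ∉ Metric.closedBall (0 : EuclideanSpace ℝ (Fin n)) R ∧
        (EuclideanSpace.equiv (Fin n) ℝ).symm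
            (fun i => MvPolynomial.eval (EuclideanSpace.equiv (Fin n) ℝ p) (X' i)) ≠ 0 ∧
        ∃ (f : EuclideanSpace ℝ (Fin n) →ₗ[ℝ] ℝ) (c : ℝ),
          f ≠ 0 ∧
          (∀ lam : ℝ,
            f (p + lam • (EuclideanSpace.equiv (Fin n) ℝ).symm
                (fun i => MvPolynomial.eval (EuclideanSpace.equiv (Fin n) ℝ p) (X' i))) = c) ∧
          (∀ x ∈ Metric.closedBall (0 : EuclideanSpace ℝ (Fin n)) R, f x ≠ c) := by
  let i : Fin n := ⟨0, by omega⟩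
  let j : Fin n := ⟨1, by omega⟩
  have hij : i ≠ j := by simp [i, j, Fin.ext_iff]
  obtain ⟨η, hη, hηR⟩ := exists_pos_mul_lt hε (R ^ m)
  let restrict (q : MvPolynomial (Fin n) ℝ) : Polynomial ℝ :=
    MvPolynomial.aeval (Pi.single i Polynomial.X) q
  obtain ⟨δ, hδη, hδ⟩ := exists_abs_le_add_ne_zero ((restrict (X j)).coeff m) hη
  set X' := X + Pi.single j (MvPolynomial.C δ * MvPolynomial.X i ^ m)
  have hX' : ∀ k, (X' k).totalDegree ≤ m :=
    MvPolynomial.totalDegree_add_piSingle_C_mul_X_pow_le hX j i δ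
  have hcoeff : (restrict (X' j)).coeff m ≠ 0 := by simpa [restrict, X'] using hδ
  obtain ⟨t, htR, hwt, ht⟩ := ((eventually_gt_atTop R).and
    (MvPolynomial.eventually_mul_abs_eval_piSingle_add_lt (hX' i) hcoeff R)).exists
  set p := EuclideanSpace.single i t
  have hp : p.ofLp = Pi.single i t := by simp [p]
  have hv : evalVectorField X' p j ≠ 0 := by rwa [evalVectorField_apply, hp]
  refine ⟨X', hX', fun x hx => ?_, p, ?_, fun h => hv ?_, ?_⟩
  · have hxi : |x i| ≤ R := (PiLp.norm_apply_le x i).trans (mem_closedBall_zero_iff.1 hx)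
    calc ‖evalVectorField X' x - evalVectorField X x‖ = |δ| * |x i| ^ m := by
          rw [norm_evalVectorField_add_piSingle_sub]; simp [abs_mul]
      _ ≤ η * R ^ m := by gcongr
      _ < ε := by linarith
  · rw [mem_closedBall_zero_iff, PiLp.norm_single, Real.norm_eq_abs, not_le]
    exact htR.trans_le (le_abs_self t)
  · exact congrArg (· j) h
  · refine exists_hyperplane_through_line_disjoint_closedBall hij p (evalVectorField X' p) hv ?_
    simp only [evalVectorField_apply, hp]
    simpa [p, hij.symm, abs_mul, mul_comm] using
      ht.trans_le (mul_le_mul_of_nonneg_right (le_abs_self t) (abs_nonneg _))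

/-- Let `n ≥ 2`, `m ≥ 1`, let `X` be a polynomial vector field on `ℝⁿ`
(each component a real polynomial of total degree at most `m`), and let `B` be a closed
ball centered at the origin. Then for every `ε > 0` there is a polynomial vector field
`X̃` of degree at most `m` which is `ε`-close to `X` on `B`, a regular point
`p ∉ B` of `X̃`, and an affine hyperplane `Σ = {x | f x = c}` (with `f` a nonzero linear
functional) containing the line `{p + λ • X̃ p : λ ∈ ℝ}` and disjoint from `B`. -/
theorem stmt_0 (n m : ℕ) (hn : 2 ≤ n) (hm : 1 ≤ m)
    (X : Fin n → MvPolynomial (Fin n) ℝ)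
    (hX : ∀ i, (X i).totalDegree ≤ m)
    (R : ℝ) (hR : 0 < R) (ε : ℝ) (hε : 0 < ε) :
    ∃ X' : Fin n → MvPolynomial (Fin n) ℝ,
      (∀ i, (X' i).totalDegree ≤ m) ∧
      (∀ x ∈ Metric.closedBall (0 : EuclideanSpace ℝ (Fin n)) R,
        ‖(EuclideanSpace.equiv (Fin n) ℝ).symm
            (fun i => MvPolynomial.eval (EuclideanSpace.equiv (Fin n) ℝ x) (X' i)) -
          (EuclideanSpace.equiv (Fin n) ℝ).symm
            (fun i => MvPolynomial.eval (EuclideanSpace.equiv (Fin n) ℝ x) (X i))‖ < ε) ∧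
      ∃ p : EuclideanSpace ℝ (Fin n),
        p ∉ Metric.closedBall (0 : EuclideanSpace ℝ (Fin n)) R ∧
        (EuclideanSpace.equiv (Fin n) ℝ).symm
            (fun i => MvPolynomial.eval (EuclideanSpace.equiv (Fin n) ℝ p) (X' i)) ≠ 0 ∧
        ∃ (f : EuclideanSpace ℝ (Fin n) →ₗ[ℝ] ℝ) (c : ℝ),
          f ≠ 0 ∧
          (∀ lam : ℝ,
            f (p + lam • (EuclideanSpace.equiv (Fin n) ℝ).symm
                (fun i => MvPolynomial.eval (EuclideanSpace.equiv (Fin n) ℝ p) (X' i))) = c) ∧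
          (∀ x ∈ Metric.closedBall (0 : EuclideanSpace ℝ (Fin n)) R, f x ≠ c) :=
  stmt_0_general n m hn X hX R ε hε
end

section
/- Let m ≥ 1 be an integer and let f, g : ℝ² → ℝ be polynomials of total degree at most m whose homogeneous components of degree m, denoted f⁽ᵐ⁾ and g⁽ᵐ⁾, satisfy f⁽ᵐ⁾(1,0) ≠ 0 and g⁽ᵐ⁾(1,0) ≠ 0. Let ρ > 0. Then there exists x₀ > 0 such that for every x > x₀ one has (f(x,0), g(x,0)) ≠ (0,0) and the straight line {(x,0) + λ·(f(x,0), g(x,0)) : λ ∈ ℝ} does not intersect the closed disk {v ∈ ℝ² : ‖v‖ ≤ ρ} centered at the origin. -/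
open Filter Finset

lemma homog_eval_smul {n : ℕ} {p : MvPolynomial (Fin 2) ℝ} (hp : p.IsHomogeneous n)
    (c : ℝ) (v : Fin 2 → ℝ) :
    MvPolynomial.eval (c • v) p = c ^ n * MvPolynomial.eval v p := by
  rw [MvPolynomial.eval_eq', MvPolynomial.eval_eq', Finset.mul_sum]
  apply Finset.sum_congr rfl
  intro d hd
  have hdeg : ∑ i, d i = n := by
    have := hp (MvPolynomial.mem_support_iff.mp hd)
    rw [← this]
    rw [Finsupp.weight_apply, Finsupp.sum]
    simp only [Pi.one_apply, smul_eq_mul, mul_one]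
    exact (Finset.sum_subset (Finset.subset_univ _)
      (fun i _ hi => Finsupp.notMem_support_iff.mp hi)).symm
  have : ∏ i, (c • v) i ^ d i = c ^ n * ∏ i, v i ^ d i := by
    simp only [Pi.smul_apply, smul_eq_mul, mul_pow]
    rw [Finset.prod_mul_distrib, Finset.prod_pow_eq_pow_sum, hdeg]
  rw [this]; ring

lemma eval_expand (m : ℕ) (p : MvPolynomial (Fin 2) ℝ) (hp : p.totalDegree ≤ m) (x : ℝ) :
    MvPolynomial.eval ![x, 0] p = ∑ i ∈ Finset.range (m+1),
      MvPolynomial.eval ![(1:ℝ), 0] (MvPolynomial.homogeneousComponent i p) * x ^ i := by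
  have hv : ![x, (0:ℝ)] = x • ![1, 0] := by
    funext i; fin_cases i <;> simp
  have hsum : ∑ i ∈ Finset.range (m+1), MvPolynomial.homogeneousComponent i p = p := by
    conv_rhs => rw [← MvPolynomial.sum_homogeneousComponent p]
    symm
    apply Finset.sum_subset (Finset.range_subset_range.mpr (by omega))
    intro i _ hi
    exact MvPolynomial.homogeneousComponent_eq_zero i p
      (by simp only [Finset.mem_range, not_lt] at hi; omega)
  conv_lhs => rw [← hsum]
  rw [map_sum]
  apply Finset.sum_congr rfl
  intro i _
  rw [hv, homog_eval_smul (MvPolynomial.homogeneousComponent_isHomogeneous i p)]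
  ring

lemma tendsto_sum_div (m : ℕ) (a : ℕ → ℝ) :
    Filter.Tendsto (fun x : ℝ => (∑ i ∈ Finset.range (m+1), a i * x ^ i) / x ^ m)
      Filter.atTop (nhds (a m)) := by
  have h2 : Filter.Tendsto (fun x : ℝ => ∑ i ∈ Finset.range m, a i * (x ^ (m - i))⁻¹)
      Filter.atTop (nhds 0) := by
    rw [show (0:ℝ) = ∑ i ∈ Finset.range m, (0:ℝ) by simp]
    apply tendsto_finset_sum
    intro i hi
    rw [Finset.mem_range] at hi
    have h3 : Filter.Tendsto (fun x : ℝ => (x ^ (m - i))⁻¹) Filter.atTop (nhds 0) :=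
      (tendsto_pow_atTop (by omega)).inv_tendsto_atTop
    simpa using h3.const_mul (a i)
  have h4 := (tendsto_const_nhds (x := a m) (f := Filter.atTop (α := ℝ))).add h2
  rw [add_zero] at h4
  apply h4.congr'
  filter_upwards [eventually_gt_atTop 0] with x hx
  have hterm : ∀ i ∈ Finset.range m, a i * x ^ i / x ^ m = a i * (x ^ (m - i))⁻¹ := by
    intro i hi
    rw [Finset.mem_range] at hi
    rw [mul_div_assoc]
    congr 1
    rw [pow_sub₀ x hx.ne' hi.le]
    field_simp
  rw [Finset.sum_range_succ, add_div, Finset.sum_div, mul_div_assoc (a m),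
    div_self (pow_ne_zero _ hx.ne'), mul_one, add_comm]
  congr 1
  exact (Finset.sum_congr rfl hterm).symm

lemma algebra_aux (ρ : ℝ) (u v Fv Gv : ℝ) (hu : u ≠ 0) (hv : v ≠ 0) :
    (Gv / u) ^ 2 - ρ ^ 2 * ((Fv / u) ^ 2 + (Gv / u) ^ 2) * v⁻¹ =
      (v * Gv ^ 2 - ρ ^ 2 * (Fv ^ 2 + Gv ^ 2)) / (u ^ 2 * v) := by
  field_simp

lemma line_dist (ρ x Fv Gv lam : ℝ) (hkey : ρ ^ 2 * (Fv ^ 2 + Gv ^ 2) < x ^ 2 * Gv ^ 2)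
    (hT : 0 < Fv ^ 2 + Gv ^ 2) :
    ρ ^ 2 < (x + lam * Fv) ^ 2 + (lam * Gv) ^ 2 := by
  nlinarith [sq_nonneg ((x + lam * Fv) * Fv + lam * Gv * Gv)]

/-- Let `m ≥ 1` and let `f, g` be real polynomials in two variables of
total degree at most `m` whose degree-`m` homogeneous components do not vanish at `(1,0)`.
Then, for any `ρ > 0`, there is `x₀ > 0` such that for every `x > x₀` the vector
`(f(x,0), g(x,0))` is nonzero and the straight line through `(x,0)` with direction
`(f(x,0), g(x,0))` does not meet the closed Euclidean disk of radius `ρ` centered at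
the origin. -/
theorem stmt_1 (m : ℕ) (hm : 1 ≤ m) (f g : MvPolynomial (Fin 2) ℝ)
    (hf : f.totalDegree ≤ m) (hg : g.totalDegree ≤ m)
    (hfm : MvPolynomial.eval ![(1 : ℝ), 0] (MvPolynomial.homogeneousComponent m f) ≠ 0)
    (hgm : MvPolynomial.eval ![(1 : ℝ), 0] (MvPolynomial.homogeneousComponent m g) ≠ 0)
    (ρ : ℝ) (hρ : 0 < ρ) :
    ∃ x₀ : ℝ, 0 < x₀ ∧ ∀ x : ℝ, x₀ < x →
      (MvPolynomial.eval ![x, 0] f, MvPolynomial.eval ![x, 0] g) ≠ (0, 0) ∧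
      ∀ lam : ℝ,
        ρ < ‖(EuclideanSpace.equiv (Fin 2) ℝ).symm
              (![x, 0] + lam • ![MvPolynomial.eval ![x, 0] f, MvPolynomial.eval ![x, 0] g])‖ := by
  obtain ⟨F, hFx⟩ : ∃ F : ℝ → ℝ, ∀ x, MvPolynomial.eval ![x, 0] f = F x := ⟨_, fun _ => rfl⟩
  obtain ⟨G, hGx⟩ : ∃ G : ℝ → ℝ, ∀ x, MvPolynomial.eval ![x, 0] g = G x := ⟨_, fun _ => rfl⟩
  obtain ⟨a, ha, ham⟩ : ∃ a : ℕ → ℝ,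
      (∀ x : ℝ, F x = ∑ i ∈ Finset.range (m + 1), a i * x ^ i) ∧ a m ≠ 0 :=
    ⟨fun i => MvPolynomial.eval ![(1:ℝ), 0] (MvPolynomial.homogeneousComponent i f),
      fun x => by rw [← hFx x]; exact eval_expand m f hf x, hfm⟩
  obtain ⟨b, hb, hbm⟩ : ∃ b : ℕ → ℝ,
      (∀ x : ℝ, G x = ∑ i ∈ Finset.range (m + 1), b i * x ^ i) ∧ b m ≠ 0 :=
    ⟨fun i => MvPolynomial.eval ![(1:ℝ), 0] (MvPolynomial.homogeneousComponent i g),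
      fun x => by rw [← hGx x]; exact eval_expand m g hg x, hgm⟩
  have hFa : Filter.Tendsto (fun x : ℝ => F x / x ^ m) Filter.atTop (nhds (a m)) :=
    (tendsto_sum_div m a).congr (fun x => by rw [ha x])
  have hGb : Filter.Tendsto (fun x : ℝ => G x / x ^ m) Filter.atTop (nhds (b m)) :=
    (tendsto_sum_div m b).congr (fun x => by rw [hb x])
  have hB2 : 0 < (b m) ^ 2 := by positivity
  have h0 : Filter.Tendsto (fun x : ℝ => (x ^ 2)⁻¹) Filter.atTop (nhds 0) :=
    (tendsto_pow_atTop (by norm_num)).inv_tendsto_atTop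
  have L : Filter.Tendsto
      (fun x : ℝ => (G x / x ^ m) ^ 2 - ρ ^ 2 * ((F x / x ^ m) ^ 2 + (G x / x ^ m) ^ 2) * (x ^ 2)⁻¹)
      Filter.atTop (nhds ((b m) ^ 2 - ρ ^ 2 * ((a m) ^ 2 + (b m) ^ 2) * 0)) :=
    (hGb.pow 2).sub ((((hFa.pow 2).add (hGb.pow 2)).const_mul (ρ ^ 2)).mul h0)
  rw [mul_zero, sub_zero] at L
  have L' : Filter.Tendsto
      (fun x : ℝ => (x ^ 2 * (G x) ^ 2 - ρ ^ 2 * ((F x) ^ 2 + (G x) ^ 2)) / x ^ (2 * m + 2))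
      Filter.atTop (nhds ((b m) ^ 2)) := by
    apply L.congr'
    filter_upwards [Filter.eventually_gt_atTop 0] with x hx
    have hxne : x ≠ 0 := hx.ne'
    have h2m : x ^ (2 * m + 2) = (x ^ m) ^ 2 * x ^ 2 := by
      rw [← pow_mul, ← pow_add]
      ring_nf
    rw [h2m]
    exact algebra_aux ρ _ _ _ _ (pow_ne_zero _ hxne) (pow_ne_zero _ hxne)
  have hev : ∀ᶠ x in Filter.atTop,
      0 < (x ^ 2 * (G x) ^ 2 - ρ ^ 2 * ((F x) ^ 2 + (G x) ^ 2)) / x ^ (2 * m + 2) :=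
    L'.eventually (eventually_gt_nhds hB2)
  obtain ⟨c, hc⟩ := Filter.eventually_atTop.mp hev
  refine ⟨max c 1, lt_max_of_lt_right one_pos, fun x hx => ?_⟩
  have hx0 : 0 < x := lt_of_lt_of_le one_pos (le_of_lt (lt_of_le_of_lt (le_max_right c 1) hx))
  have hq := hc x (le_of_lt (lt_of_le_of_lt (le_max_left c 1) hx))
  have hD : (0:ℝ) < x ^ (2 * m + 2) := pow_pos hx0 _
  have hN : 0 < x ^ 2 * (G x) ^ 2 - ρ ^ 2 * ((F x) ^ 2 + (G x) ^ 2) := by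
    have h1 := mul_pos hq hD
    rwa [div_mul_cancel₀ _ hD.ne'] at h1
  have hkey : ρ ^ 2 * ((F x) ^ 2 + (G x) ^ 2) < x ^ 2 * (G x) ^ 2 := by linarith
  have hGne : G x ≠ 0 := by
    intro h
    rw [h] at hkey
    have h1 : x ^ 2 * (0:ℝ) ^ 2 = 0 := by ring
    have h2 : 0 ≤ ρ ^ 2 * ((F x) ^ 2 + (0:ℝ) ^ 2) := by positivity
    linarith
  have hT : 0 < (F x) ^ 2 + (G x) ^ 2 := by positivity
  rw [hFx x, hGx x]
  constructor
  · simp only [ne_eq, Prod.mk.injEq, not_and]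
    intro _
    exact hGne
  · intro lam
    rw [EuclideanSpace.norm_eq, Real.lt_sqrt hρ.le]
    have hcoord : ∀ i : Fin 2, ((EuclideanSpace.equiv (Fin 2) ℝ).symm
        (![x, 0] + lam • ![F x, G x])) i = (![x, 0] + lam • ![F x, G x]) i := fun i => rfl
    simp only [hcoord, Fin.sum_univ_two, Pi.add_apply, Pi.smul_apply, smul_eq_mul,
      Matrix.cons_val_zero, Matrix.cons_val_one, Matrix.head_cons, Real.norm_eq_abs, sq_abs]
    have hld := line_dist ρ x (F x) (G x) lam hkey hT
    linarith [hld]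
end

section
/- Let a, γ, c, μ ∈ ℝ with γ ≠ 0, set β = −sign(γ), Γ = √|γ|, and Ω = −aγ, and assume Ω > 0. Define f₁ : (0,∞) × ℝ → ℝ² by f₁(r,w) = ( π a r w , (π/2)(4β + 4μw + γ r² + 2 c w²) ). Then f₁(2/Γ, 0) = (0,0), the Jacobian matrix of f₁ at (2/Γ, 0) equals [[0, 2πa/Γ], [−2πβΓ, 2πμ]], and its eigenvalues are λ^±(μ) = πμ ± (π/Γ)√(μ²Γ² − 4Ω). In particular, for every μ with |μ| < 2√Ω/Γ the eigenvalues form a complex conjugate pair with real part πμ and nonzero imaginary part ±(π/Γ)√(4Ω − μ²Γ²), and the derivative of the real part with respect to μ equals π ≠ 0. -/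
/-!
Since `β Γ² = -γ`, hence `a β Γ² = Ω`, the point `(2/Γ, 0)` is a zero of `f₁`, and the Jacobian
there has trace `2πμ` and determinant `4π²Ω/Γ²`. Completing the square, its characteristic
polynomial is `(z - πμ)² - (π/Γ)²(μ²Γ² - 4Ω)`; when `ν²Γ² < 4Ω` the subtracted term is the square
of the purely imaginary number `i (π/Γ) √(4Ω - ν²Γ²)`.
-/

open Real

theorem Real.sign_mul_abs (x : ℝ) : Real.sign x * |x| = x := by
  rcases lt_trichotomy x 0 with hx | rfl | hx
  · rw [Real.sign_of_neg hx, abs_of_neg hx]; ring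
  · simp
  · rw [Real.sign_of_pos hx, abs_of_pos hx]; ring

theorem Real.sign_mul_sq_sqrt_abs (x : ℝ) : Real.sign x * √|x| ^ 2 = x := by
  rw [Real.sq_sqrt (abs_nonneg x), Real.sign_mul_abs]

theorem sq_mul_sq_lt_of_abs_lt {x Γ s : ℝ} (hΓ : 0 < Γ) (h : |x| < 2 * √s / Γ) :
    x ^ 2 * Γ ^ 2 < 4 * s := by
  have h' : |x| * Γ / 2 < √s := by rw [lt_div_iff₀ hΓ] at h; linarith
  rw [Real.lt_sqrt (by positivity), div_pow, mul_pow, sq_abs] at h'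
  linarith

theorem Matrix.det_smul_one_sub_of_zero_eq_sub_sq {R : Type*} [CommRing R] (z b c d m : R)
    (hd : d = 2 * m) :
    (z • (1 : Matrix (Fin 2) (Fin 2) R) - !![0, b; c, d]).det = (z - m) ^ 2 - (m ^ 2 + b * c) := by
  simp only [Matrix.det_fin_two, Matrix.sub_apply, Matrix.smul_apply, Matrix.one_apply_eq,
    Matrix.one_apply_ne zero_ne_one, Matrix.one_apply_ne one_ne_zero, Matrix.of_apply,
    Matrix.cons_val', Matrix.cons_val_zero, Matrix.cons_val_one, Matrix.cons_val_fin_one,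
    smul_eq_mul, hd]
  ring

theorem Complex.sub_sq_eq_neg_sq_iff (z m k : ℂ) :
    (z - m) ^ 2 = -k ^ 2 ↔ z = m + Complex.I * k ∨ z = m - Complex.I * k := by
  rw [← neg_one_mul, ← Complex.I_sq, ← mul_pow, sq_eq_sq_iff_eq_or_eq_neg, sub_eq_iff_eq_add',
    sub_eq_iff_eq_add', ← sub_eq_add_neg]

noncomputable def melnikovFunction (a β μ γ c : ℝ) (p : ℝ × ℝ) : ℝ × ℝ :=
  (π * a * p.1 * p.2, π / 2 * (4 * β + 4 * μ * p.2 + γ * p.1 ^ 2 + 2 * c * p.2 ^ 2))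

open ContinuousLinearMap in
theorem hasFDerivAt_melnikovFunction (a β μ γ c r w : ℝ) :
    HasFDerivAt (melnikovFunction a β μ γ c)
      (((π * a * w) • fst ℝ ℝ ℝ + (π * a * r) • snd ℝ ℝ ℝ).prod
        ((π * γ * r) • fst ℝ ℝ ℝ + (2 * π * (μ + c * w)) • snd ℝ ℝ ℝ)) (r, w) := by
  have h₁ := ((hasFDerivAt_fst (𝕜 := ℝ) (p := (r, w))).mul hasFDerivAt_snd).const_mul (π * a)
  have h₂ := ((((hasFDerivAt_snd (𝕜 := ℝ) (p := (r, w))).const_mul (4 * μ)).add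
    ((hasFDerivAt_fst.pow 2).const_mul γ)).add
    ((hasFDerivAt_snd.pow 2).const_mul (2 * c))).const_add (4 * β) |>.const_mul (π / 2)
  refine ((h₁.prodMk h₂).congr_of_eventuallyEq (.of_forall fun p => ?_)).congr_fderiv ?_
  · ext <;> simp only [melnikovFunction, Pi.mul_apply, Pi.add_apply] <;> ring
  · refine ContinuousLinearMap.ext fun x => Prod.ext ?_ ?_ <;>
      simp only [smul_add, Nat.add_one_sub_one, pow_one, nsmul_eq_mul, Nat.cast_ofNat, prod_apply,
        add_apply, smul_apply, coe_fst', coe_snd', smul_eq_mul] <;>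
      ring

section HopfPoint

variable {a β γ Γ Ω : ℝ}

theorem melnikovFunction_hopfPoint (μ c : ℝ) (hΓ : Γ ≠ 0) (hβΓ : β * Γ ^ 2 = -γ) :
    melnikovFunction a β μ γ c (2 / Γ, 0) = (0, 0) := by
  ext
  · simp [melnikovFunction]
  · dsimp only [melnikovFunction]
    field_simp
    linear_combination 4 * π * hβΓ

open ContinuousLinearMap in
theorem hasFDerivAt_melnikovFunction_hopfPoint (μ c : ℝ) (hΓ : Γ ≠ 0) (hβΓ : β * Γ ^ 2 = -γ) :
    HasFDerivAt (melnikovFunction a β μ γ c)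
      (((2 * π * a / Γ) • snd ℝ ℝ ℝ).prod
        ((-(2 * π * β * Γ)) • fst ℝ ℝ ℝ + (2 * π * μ) • snd ℝ ℝ ℝ)) (2 / Γ, 0) := by
  refine (hasFDerivAt_melnikovFunction a β μ γ c _ _).congr_fderiv
    (ContinuousLinearMap.ext fun x => Prod.ext ?_ ?_)
  all_goals simp only [prod_apply, add_apply, smul_apply, coe_fst', coe_snd', smul_eq_mul]
  · ring
  · field_simp
    linear_combination x.1 * hβΓ

noncomputable def hopfJacobian (a β Γ m : ℝ) : Matrix (Fin 2) (Fin 2) ℂ :=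
  !![0, ((2 * π * a / Γ : ℝ) : ℂ); ((-(2 * π * β * Γ) : ℝ) : ℂ), ((2 * π * m : ℝ) : ℂ)]

theorem det_smul_one_sub_hopfJacobian_eq_zero_iff (hΓ : Γ ≠ 0) (haβ : a * β * Γ ^ 2 = Ω)
    (m : ℝ) (z : ℂ) :
    (z • 1 - hopfJacobian a β Γ m).det = 0
      ↔ (z - ((π * m : ℝ) : ℂ)) ^ 2 = ((π / Γ : ℝ) : ℂ) ^ 2 * ((m ^ 2 * Γ ^ 2 - 4 * Ω : ℝ) : ℂ) := by
  have hsq : ((π * m : ℝ) : ℂ) ^ 2 + ((2 * π * a / Γ : ℝ) : ℂ) * ((-(2 * π * β * Γ) : ℝ) : ℂ)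
      = ((π / Γ : ℝ) : ℂ) ^ 2 * ((m ^ 2 * Γ ^ 2 - 4 * Ω : ℝ) : ℂ) := by
    norm_cast
    field_simp
    linear_combination (-4) * haβ
  rw [hopfJacobian, Matrix.det_smul_one_sub_of_zero_eq_sub_sq _ _ _ _ ((π * m : ℝ) : ℂ)
    (by push_cast; ring), sub_eq_zero, hsq]

theorem det_smul_one_sub_hopfJacobian_eq_zero_iff_of_sq_mul_sq_lt (hΓ : Γ ≠ 0)
    (haβ : a * β * Γ ^ 2 = Ω) {m : ℝ} (hm : m ^ 2 * Γ ^ 2 < 4 * Ω) (z : ℂ) :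
    (z • 1 - hopfJacobian a β Γ m).det = 0
      ↔ z = ((π * m : ℝ) : ℂ) + Complex.I * ((π / Γ * √(4 * Ω - m ^ 2 * Γ ^ 2) : ℝ) : ℂ)
        ∨ z = ((π * m : ℝ) : ℂ) - Complex.I * ((π / Γ * √(4 * Ω - m ^ 2 * Γ ^ 2) : ℝ) : ℂ) := by
  have hK : ((π / Γ : ℝ) : ℂ) ^ 2 * ((m ^ 2 * Γ ^ 2 - 4 * Ω : ℝ) : ℂ)
      = -((π / Γ * √(4 * Ω - m ^ 2 * Γ ^ 2) : ℝ) : ℂ) ^ 2 := by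
    norm_cast
    rw [mul_pow, Real.sq_sqrt (by linarith)]
    ring
  rw [det_smul_one_sub_hopfJacobian_eq_zero_iff hΓ haβ, hK, Complex.sub_sq_eq_neg_sq_iff]

end HopfPoint

theorem stmt_5_general (a γ c μ β Γ Ω : ℝ) (hγ : γ ≠ 0)
    (hβ : β = - Real.sign γ) (hΓ : Γ = Real.sqrt |γ|) (hΩ : Ω = -(a*γ))
    (f₁ : ℝ × ℝ → ℝ × ℝ)
    (hf₁ : f₁ = fun p => (Real.pi * a * p.1 * p.2,
      Real.pi/2 * (4*β + 4*μ*p.2 + γ*p.1^2 + 2*c*p.2^2))) :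
    f₁ (2/Γ, 0) = (0, 0) ∧
    HasFDerivAt f₁
      (((2*Real.pi*a/Γ) • ContinuousLinearMap.snd ℝ ℝ ℝ).prod
        ((-(2*Real.pi*β*Γ)) • ContinuousLinearMap.fst ℝ ℝ ℝ
          + (2*Real.pi*μ) • ContinuousLinearMap.snd ℝ ℝ ℝ)) (2/Γ, 0) ∧
    (∀ z : ℂ,
      Matrix.det (z • (1 : Matrix (Fin 2) (Fin 2) ℂ)
          - !![0, ((2*Real.pi*a/Γ : ℝ) : ℂ);
               ((-(2*Real.pi*β*Γ) : ℝ) : ℂ), ((2*Real.pi*μ : ℝ) : ℂ)]) = 0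
        ↔ (z - ((Real.pi*μ : ℝ) : ℂ))^2
            = ((Real.pi/Γ : ℝ) : ℂ)^2 * ((μ^2*Γ^2 - 4*Ω : ℝ) : ℂ)) ∧
    (∀ ν : ℝ, |ν| < 2*Real.sqrt Ω/Γ →
      (∀ z : ℂ,
        Matrix.det (z • (1 : Matrix (Fin 2) (Fin 2) ℂ)
            - !![0, ((2*Real.pi*a/Γ : ℝ) : ℂ);
                 ((-(2*Real.pi*β*Γ) : ℝ) : ℂ), ((2*Real.pi*ν : ℝ) : ℂ)]) = 0
          ↔ z = ((Real.pi*ν : ℝ) : ℂ)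
                + Complex.I * ((Real.pi/Γ * Real.sqrt (4*Ω - ν^2*Γ^2) : ℝ) : ℂ)
            ∨ z = ((Real.pi*ν : ℝ) : ℂ)
                - Complex.I * ((Real.pi/Γ * Real.sqrt (4*Ω - ν^2*Γ^2) : ℝ) : ℂ)) ∧
      Real.pi/Γ * Real.sqrt (4*Ω - ν^2*Γ^2) ≠ 0 ∧
      HasDerivAt (fun t : ℝ => Real.pi * t) Real.pi ν) ∧
    Real.pi ≠ 0 := by
  obtain rfl : f₁ = melnikovFunction a β μ γ c := hf₁
  have hΓpos : 0 < Γ := hΓ ▸ Real.sqrt_pos.mpr (abs_pos.mpr hγ)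
  have hβΓ : β * Γ ^ 2 = -γ := by rw [hβ, hΓ, neg_mul, Real.sign_mul_sq_sqrt_abs]
  have haβ : a * β * Γ ^ 2 = Ω := by linear_combination a * hβΓ - hΩ
  refine ⟨melnikovFunction_hopfPoint μ c hΓpos.ne' hβΓ,
    hasFDerivAt_melnikovFunction_hopfPoint μ c hΓpos.ne' hβΓ,
    det_smul_one_sub_hopfJacobian_eq_zero_iff hΓpos.ne' haβ μ, fun ν hν => ?_, pi_ne_zero⟩
  have hlt : ν ^ 2 * Γ ^ 2 < 4 * Ω := sq_mul_sq_lt_of_abs_lt hΓpos hν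
  exact ⟨det_smul_one_sub_hopfJacobian_eq_zero_iff_of_sq_mul_sq_lt hΓpos.ne' haβ hlt,
    (mul_pos (div_pos pi_pos hΓpos) (Real.sqrt_pos.mpr (by linarith))).ne',
    by simpa using (hasDerivAt_id ν).const_mul π⟩

/-- With `β = -sign γ`, `Γ = √|γ|`, `Ω = -aγ > 0`, the first-order
Melnikov function `f₁(r,w) = (πarw, (π/2)(4β + 4μw + γr² + 2cw²))` vanishes at
`(2/Γ, 0)`, its Jacobian there is `[[0, 2πa/Γ], [-2πβΓ, 2πμ]]`, whose eigenvalues `z`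
are characterized by `(z - πμ)² = (π/Γ)²(μ²Γ² - 4Ω)`, i.e.
`λ± = πμ ± (π/Γ)√(μ²Γ² - 4Ω)`.  In particular, for every `ν` with `|ν| < 2√Ω/Γ` the
eigenvalues form a complex conjugate pair `πν ± i(π/Γ)√(4Ω - ν²Γ²)` with nonzero
imaginary part, and the derivative of the real part `π·ν` with respect to `ν` is
`π ≠ 0`. -/
theorem stmt_5 (a γ c μ β Γ Ω : ℝ) (hγ : γ ≠ 0)
    (hβ : β = - Real.sign γ) (hΓ : Γ = Real.sqrt |γ|) (hΩ : Ω = -(a*γ)) (hΩpos : 0 < Ω)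
    (f₁ : ℝ × ℝ → ℝ × ℝ)
    (hf₁ : f₁ = fun p => (Real.pi * a * p.1 * p.2,
      Real.pi/2 * (4*β + 4*μ*p.2 + γ*p.1^2 + 2*c*p.2^2))) :
    f₁ (2/Γ, 0) = (0, 0) ∧
    HasFDerivAt f₁
      (((2*Real.pi*a/Γ) • ContinuousLinearMap.snd ℝ ℝ ℝ).prod
        ((-(2*Real.pi*β*Γ)) • ContinuousLinearMap.fst ℝ ℝ ℝ
          + (2*Real.pi*μ) • ContinuousLinearMap.snd ℝ ℝ ℝ)) (2/Γ, 0) ∧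
    (∀ z : ℂ,
      Matrix.det (z • (1 : Matrix (Fin 2) (Fin 2) ℂ)
          - !![0, ((2*Real.pi*a/Γ : ℝ) : ℂ);
               ((-(2*Real.pi*β*Γ) : ℝ) : ℂ), ((2*Real.pi*μ : ℝ) : ℂ)]) = 0
        ↔ (z - ((Real.pi*μ : ℝ) : ℂ))^2
            = ((Real.pi/Γ : ℝ) : ℂ)^2 * ((μ^2*Γ^2 - 4*Ω : ℝ) : ℂ)) ∧
    (∀ ν : ℝ, |ν| < 2*Real.sqrt Ω/Γ →
      (∀ z : ℂ,
        Matrix.det (z • (1 : Matrix (Fin 2) (Fin 2) ℂ)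
            - !![0, ((2*Real.pi*a/Γ : ℝ) : ℂ);
                 ((-(2*Real.pi*β*Γ) : ℝ) : ℂ), ((2*Real.pi*ν : ℝ) : ℂ)]) = 0
          ↔ z = ((Real.pi*ν : ℝ) : ℂ)
                + Complex.I * ((Real.pi/Γ * Real.sqrt (4*Ω - ν^2*Γ^2) : ℝ) : ℂ)
            ∨ z = ((Real.pi*ν : ℝ) : ℂ)
                - Complex.I * ((Real.pi/Γ * Real.sqrt (4*Ω - ν^2*Γ^2) : ℝ) : ℂ)) ∧
      Real.pi/Γ * Real.sqrt (4*Ω - ν^2*Γ^2) ≠ 0 ∧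
      HasDerivAt (fun t : ℝ => Real.pi * t) Real.pi ν) ∧
    Real.pi ≠ 0 :=
  stmt_5_general a γ c μ β Γ Ω hγ hβ hΓ hΩ f₁ hf₁
end

section
/- Let P̃, Q̃, R̃ : ℝ³ → ℝ be C¹ functions with P̃(0,0,0) ≠ 0 and Q̃(0,0,0) ≠ 0, and let L ∈ ℝ, δ > 0. Set a₀ = Q̃(0), b₀ = −P̃(0), a₁ = L/P̃(0), b₂ = −L/Q̃(0), a₂ = (1 + 2P̃(0)Q̃(0)L + L²δ)/(P̃(0)²Q̃(0)), and define the vector field X_{L,δ}(x,y,z) = ( ((a₀ + δa₁)x + b₀y)·P̃(x,y,z) , ((a₀ + δa₂)x + (b₀ + δb₂)y)·Q̃(x,y,z) , (a₀x + b₀y)·R̃(x,y,z) ). Then the origin is an equilibrium of X_{L,δ}, and the characteristic polynomial of the Jacobian matrix of X_{L,δ} at the origin is p(λ) = −λ³ − δλ; in particular the eigenvalues are 0, i√δ, and −i√δ, so the origin is a Hopf-Zero equilibrium of X_{L,δ}. -/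
/-!
The field is `X v = diag(P̃ v, Q̃ v, R̃ v) (A v)` for the constant matrix `A` of the coefficients.
Since `A 0 = 0`, the product rule gives the Jacobian `J = diag(P̃ 0, Q̃ 0, R̃ 0) A` at the
origin. Its last column vanishes, so `det (J - λ) = -λ (λ² - t λ + d)` with `t`, `d` the trace
and determinant of the upper-left `2 × 2` block of `J`; the coefficients `a₁, a₂, b₂` are
chosen exactly so that `t = 0` and `d = δ`.
-/

open Matrix

theorem HasFDerivAt.clm_apply_mul_of_apply_eq_zero {𝕜 E : Type*} [NontriviallyNormedField 𝕜]
    [NormedAddCommGroup E] [NormedSpace 𝕜 E] {F : E → 𝕜} {F' : E →L[𝕜] 𝕜} {x : E}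
    (hF : HasFDerivAt F F' x) (ℓ : E →L[𝕜] 𝕜) (hℓ : ℓ x = 0) :
    HasFDerivAt (fun v => ℓ v * F v) (F x • ℓ) x := by
  refine (ℓ.hasFDerivAt.fun_mul hF).congr_fderiv ?_
  ext v
  simp [hℓ]

theorem hasFDerivAt_mulVec_mul_of_mulVec_eq_zero {𝕜 n : Type*} [NontriviallyNormedField 𝕜]
    [CompleteSpace 𝕜] [Fintype n] [DecidableEq n] (A : Matrix n n 𝕜) (F : n → (n → 𝕜) → 𝕜)
    {x : n → 𝕜}
    (hF : ∀ i, DifferentiableAt 𝕜 (F i) x) (hx : A *ᵥ x = 0) :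
    HasFDerivAt (fun v i => (A *ᵥ v) i * F i v)
      (toLin' (diagonal (fun i => F i x) * A)).toContinuousLinearMap x := by
  refine hasFDerivAt_pi'' fun i => ?_
  have hℓ : ((ContinuousLinearMap.proj i).comp (toLin' A).toContinuousLinearMap) x = 0 := by
    simp [hx]
  refine ((hF i).hasFDerivAt.clm_apply_mul_of_apply_eq_zero _ hℓ).congr_fderiv ?_
  ext v
  simp [-mulVec_mulVec, mulVec_diagonal]

theorem Matrix.det_fin_three_sub_smul_one_of_col_two_eq_zero {R : Type*} [CommRing R]
    (J : Matrix (Fin 3) (Fin 3) R) (hJ : ∀ i, J i 2 = 0) (z : R) :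
    (J - z • 1).det =
      -z ^ 3 + (J 0 0 + J 1 1) * z ^ 2 - (J 0 0 * J 1 1 - J 0 1 * J 1 0) * z := by
  simp [det_fin_three, hJ]
  ring

theorem Complex.neg_cube_sub_mul_eq_zero_iff {δ : ℝ} (hδ : 0 ≤ δ) (z : ℂ) :
    -z ^ 3 - δ * z = 0 ↔ z = 0 ∨ z = I * (√δ : ℝ) ∨ z = -(I * (√δ : ℝ)) := by
  have hw : (I * (√δ : ℝ)) ^ 2 = -δ := by
    rw [mul_pow, I_sq, ← ofReal_pow, Real.sq_sqrt hδ]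
    ring
  have hfac : -z ^ 3 - δ * z = -(z * ((z - I * (√δ : ℝ)) * (z + I * (√δ : ℝ)))) := by
    linear_combination (-z) * hw
  simp [hfac, sub_eq_zero, add_eq_zero_iff_eq_neg]

/-- Let `P̃, Q̃, R̃ : ℝ³ → ℝ` be `C¹` functions with `P̃(0) ≠ 0`,
`Q̃(0) ≠ 0`, let `L ∈ ℝ`, `δ > 0`, and let `X_{L,δ}` be the vector field of the paper
built from the coefficients `a₀ = Q̃(0)`, `b₀ = -P̃(0)`, `a₁ = L/P̃(0)`,
`b₂ = -L/Q̃(0)`, `a₂ = (1 + 2P̃(0)Q̃(0)L + L²δ)/(P̃(0)²Q̃(0))`.  Then the origin is an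
equilibrium of `X_{L,δ}`, and there is a matrix `J` (the Jacobian of `X_{L,δ}` at the
origin) such that `det(J - λI) = -λ³ - δλ` for all `λ ∈ ℂ`; in particular the
eigenvalues of `J` are `0`, `i√δ` and `-i√δ`, so the origin is a Hopf-Zero
equilibrium. -/
theorem stmt_7 (P Q R : (Fin 3 → ℝ) → ℝ)
    (hP : ContDiff ℝ 1 P) (hQ : ContDiff ℝ 1 Q) (hR : ContDiff ℝ 1 R)
    (hP0 : P 0 ≠ 0) (hQ0 : Q 0 ≠ 0)
    (L δ : ℝ) (hδ : 0 < δ)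
    (a₀ b₀ a₁ b₂ a₂ : ℝ)
    (ha₀ : a₀ = Q 0) (hb₀ : b₀ = -P 0) (ha₁ : a₁ = L / P 0) (hb₂ : b₂ = -L / Q 0)
    (ha₂ : a₂ = (1 + 2*(P 0)*(Q 0)*L + L^2*δ) / ((P 0)^2 * Q 0))
    (X : (Fin 3 → ℝ) → (Fin 3 → ℝ))
    (hX : X = fun v => ![((a₀ + δ*a₁) * v 0 + b₀ * v 1) * P v,
                         ((a₀ + δ*a₂) * v 0 + (b₀ + δ*b₂) * v 1) * Q v,
                         (a₀ * v 0 + b₀ * v 1) * R v]) :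
    X 0 = 0 ∧
    ∃ J : Matrix (Fin 3) (Fin 3) ℝ,
      HasFDerivAt X (LinearMap.toContinuousLinearMap (Matrix.toLin' J)) 0 ∧
      (∀ z : ℂ,
        Matrix.det (J.map (Complex.ofReal) - z • (1 : Matrix (Fin 3) (Fin 3) ℂ))
          = -z^3 - (δ : ℂ) * z) ∧
      (∀ z : ℂ,
        Matrix.det (J.map (Complex.ofReal) - z • (1 : Matrix (Fin 3) (Fin 3) ℂ)) = 0
          ↔ z = 0 ∨ z = Complex.I * ((Real.sqrt δ : ℝ) : ℂ)
              ∨ z = -(Complex.I * ((Real.sqrt δ : ℝ) : ℂ))) := by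
  set A : Matrix (Fin 3) (Fin 3) ℝ :=
    !![a₀ + δ * a₁, b₀, 0; a₀ + δ * a₂, b₀ + δ * b₂, 0; a₀, b₀, 0]
  have hXA : X = fun v i => (A *ᵥ v) i * ![P, Q, R] i v := by
    subst hX
    funext v i
    fin_cases i <;> simp [A, mulVec, dotProduct, Fin.sum_univ_three]
  set J := diagonal (fun i => ![P, Q, R] i 0) * A
  have hJ : HasFDerivAt X (toLin' J).toContinuousLinearMap 0 := by
    rw [hXA]
    refine hasFDerivAt_mulVec_mul_of_mulVec_eq_zero A _ (fun i => ?_) (mulVec_zero A)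
    fin_cases i
    exacts [hP.differentiable one_ne_zero 0, hQ.differentiable one_ne_zero 0,
      hR.differentiable one_ne_zero 0]
  have hblock : J 0 0 + J 1 1 = 0 ∧ J 0 0 * J 1 1 - J 0 1 * J 1 0 = δ := by
    simp only [J, A, diagonal_mul, of_apply, cons_val', cons_val_zero, cons_val_one,
      cons_val_fin_one]
    subst ha₀ hb₀ ha₁ hb₂ ha₂
    constructor <;> field_simp <;> ring
  have hchar (z : ℂ) : (J.map Complex.ofReal - z • 1).det = -z ^ 3 - δ * z := by
    have hcol (i : Fin 3) : J.map Complex.ofReal i 2 = 0 := by fin_cases i <;> simp [J, A]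
    rw [det_fin_three_sub_smul_one_of_col_two_eq_zero _ hcol, map_apply, map_apply, map_apply,
      map_apply]
    rw [← Complex.ofReal_add, hblock.1, ← Complex.ofReal_mul, ← Complex.ofReal_mul,
      ← Complex.ofReal_sub, hblock.2, Complex.ofReal_zero]
    ring
  refine ⟨by rw [hXA]; funext i; simp, J, hJ, hchar, fun z => ?_⟩
  rw [hchar, Complex.neg_cube_sub_mul_eq_zero_iff hδ.le]
end

section
/- Let P̃, Q̃, R̃ : ℝ³ → ℝ be C¹ functions with P̃(0,0,0) ≠ 0, Q̃(0,0,0) ≠ 0, let L ∈ ℝ, δ > 0, and let J be the 3×3 matrix J = [[Q̃(0)P̃(0) + δL, −P̃(0)², 0], [Q̃(0)² + δ(1 + 2P̃(0)Q̃(0)L + L²δ)/P̃(0)², −P̃(0)Q̃(0) − δL, 0], [Q̃(0)R̃(0), −P̃(0)R̃(0), 0]] (the Jacobian at the origin of the field X_{L,δ} of the paper). Let M = [[1, 0, 0], [(Lδ + P̃(0)Q̃(0))/P̃(0)², √δ/P̃(0)², 0], [R̃(0)/P̃(0), −L√δ R̃(0)/P̃(0), 1]]. Then det M = √δ/P̃(0)²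 ≠ 0 and M⁻¹ J M = √δ · [[0, −1, 0], [1, 0, 0], [0, 0, 0]]; that is, after the time rescaling t̄ = √δ·t, the linear change of variables (x,y,z) = M(x̄,ȳ,z̄) puts the linear part of X_{L,δ} into the Jordan normal form (−ȳ, x̄, 0). -/
/-- For `C¹` functions `P̃, Q̃, R̃ : ℝ³ → ℝ` with `P̃(0) ≠ 0`,
`Q̃(0) ≠ 0`, `L ∈ ℝ` and `δ > 0`, the Jacobian matrix `J` at the origin of the field
`X_{L,δ}` of the paper and the matrix `M` below satisfy `det M = √δ/P̃(0)² ≠ 0` and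
`M⁻¹ J M = √δ · [[0,-1,0],[1,0,0],[0,0,0]]`: the linear change of variables `M`
together with the time rescaling `t̄ = √δ t` puts the linear part of `X_{L,δ}` into the
Jordan normal form `(-ȳ, x̄, 0)`. -/
theorem stmt_8 (P Q R : (Fin 3 → ℝ) → ℝ)
    (hP : ContDiff ℝ 1 P) (hQ : ContDiff ℝ 1 Q) (hR : ContDiff ℝ 1 R)
    (hP0 : P 0 ≠ 0) (hQ0 : Q 0 ≠ 0)
    (L δ : ℝ) (hδ : 0 < δ)
    (J M : Matrix (Fin 3) (Fin 3) ℝ)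
    (hJ : J = !![Q 0 * P 0 + δ*L, -(P 0)^2, 0;
                 (Q 0)^2 + δ*(1 + 2*(P 0)*(Q 0)*L + L^2*δ)/(P 0)^2, -(P 0)*(Q 0) - δ*L, 0;
                 Q 0 * R 0, -(P 0)*(R 0), 0])
    (hM : M = !![1, 0, 0;
                 (L*δ + P 0 * Q 0)/(P 0)^2, Real.sqrt δ/(P 0)^2, 0;
                 R 0 / P 0, -L*Real.sqrt δ*(R 0)/(P 0), 1]) :
    M.det = Real.sqrt δ / (P 0)^2 ∧ M.det ≠ 0 ∧
    M⁻¹ * J * M = Real.sqrt δ • !![(0:ℝ), -1, 0; 1, 0, 0; 0, 0, 0] := by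
  have hs : Real.sqrt δ > 0 := Real.sqrt_pos.mpr hδ
  have hs2 : Real.sqrt δ * Real.sqrt δ = δ := Real.mul_self_sqrt hδ.le
  have hdet : M.det = Real.sqrt δ / (P 0)^2 := by
    subst hM; simp [Matrix.det_fin_three]
  have hdet0 : M.det ≠ 0 := by
    rw [hdet]; positivity
  refine ⟨hdet, hdet0, ?_⟩
  have hinv : Invertible M := M.invertibleOfIsUnitDet hdet0.isUnit
  rw [Matrix.mul_assoc, Matrix.inv_mul_eq_iff_eq_mul_of_invertible]
  subst hJ hM
  rw [show δ = Real.sqrt δ * Real.sqrt δ from hs2.symm]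
  have hs0 : Real.sqrt δ ≠ 0 := ne_of_gt hs
  ext i j
  fin_cases i <;> fin_cases j <;>
    simp [Matrix.mul_apply, Fin.sum_univ_three, Matrix.smul_apply,
      Matrix.vecHead, Matrix.vecTail] <;>
    (try field_simp) <;> (try ring) <;> (try linear_combination R 0 * P 0 ^ 2 * L * hs2)
end

section
/- Let T > 0, let D ⊂ ℝ² be open and bounded, let ε₀ > 0, and let F₁, F₂ : ℝ × D → ℝ² and F̃ : ℝ × D × (−ε₀, ε₀) → ℝ² be C² functions that are T-periodic in the first variable. For z ∈ D and ε ∈ (−ε₀, ε₀), let x(t, z, ε) denote the solution of the initial value problem x' = ε F₁(t, x) + ε² F₂(t, x) + ε³ F̃(t, x, ε), x(0) = z. Define f₁(z) = ∫₀^T F₁(t, z) dt and f₂(z) = ∫₀^T [ F₂(t, z) + D_x F₁(t, z) · ∫₀^t F₁(s, z) ds ] dt. Then for every compact set K ⊂ D there exist constants C > 0 and ε₁ ∈ (0, ε₀) such that for all z ∈ K and all |ε| < ε₁, the solution x(·, z, ε) is defined on [0, T] and ‖x(T, z, ε) − z − ε f₁(z) − ε² f₂(z)‖ ≤ C |ε|³.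 -/
/-!
Picard–Lindelöf gives a solution that stays in a ball around `z` up to time `T`. The rest is one
comparison principle: if `x'` stays within `c` of a continuous `f` on `[0, T]`, then
`‖x t - x 0 - ∫₀ᵗ f‖ ≤ c t`. Applied three times, it gives `x t - z = O(ε)`, then
`x t - z - ε w t = O(ε²)` with `w t = ∫₀ᵗ F₁ (s, z) ds`, and finally the `O(ε³)` bound, after
expanding `F₁ (s, x s)` to second order around `z` and replacing `x s - z` by `ε w s`. The
constants depend only on bounds and Lipschitz constants of `F₁`, `F₂`, `F̃` and `D F₁` on a
compact neighbourhood of `[0, T] × K`, so they are uniform in `z ∈ K`.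
-/

open Set Metric Filter Function
open scoped NNReal Topology

section Lipschitz

variable {α β γ : Type*} [PseudoEMetricSpace α] [PseudoEMetricSpace β] [PseudoEMetricSpace γ]
  {f : α × β → γ} {K : ℝ≥0} {s : Set α} {u : Set β}

theorem LipschitzOnWith.comp_prodMk_left (hf : LipschitzOnWith K f (s ×ˢ u)) {a : α}
    (ha : a ∈ s) : LipschitzOnWith K (fun y => f (a, y)) u := by
  have h := hf.comp (LipschitzWith.prodMk_left a).lipschitzOnWith fun y hy => ⟨ha, hy⟩
  rwa [mul_one] at h

theorem isometry_prodMk_assoc_const {δ : Type*} [PseudoEMetricSpace δ] (c : δ) :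
    Isometry fun p : α × β => (p.1, p.2, c) := by
  intro p q
  simp [Prod.edist_eq]

end Lipschitz

theorem ContDiffOn.eventually_lipschitzOnWith {E F : Type*} [NormedAddCommGroup E]
    [NormedSpace ℝ E] [NormedAddCommGroup F] [NormedSpace ℝ F] {f : E → F} {U S : Set E}
    (hf : ContDiffOn ℝ 1 f U) (hU : IsOpen U) (hS : IsCompact S) (hSU : S ⊆ U) :
    ∀ᶠ L in atTop, LipschitzOnWith L f S := by
  obtain ⟨L₀, hL₀⟩ := LocallyLipschitzOn.exists_lipschitzOnWith_of_compact hS fun p hp => by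
    obtain ⟨K, t, ht, hK⟩ := (hf.contDiffAt (hU.mem_nhds (hSU hp))).exists_lipschitzOnWith
    exact ⟨K, t, mem_nhdsWithin_of_mem_nhds ht, hK⟩
  filter_upwards [eventually_ge_atTop L₀] with L hL using hL₀.weaken hL

theorem IsCompact.eventually_forall_norm_le {X F : Type*} [TopologicalSpace X]
    [NormedAddCommGroup F] {f : X → F} {S : Set X} (hS : IsCompact S) (hf : ContinuousOn f S) :
    ∀ᶠ M in atTop, ∀ p ∈ S, ‖f p‖ ≤ M := by
  obtain ⟨M₀, hM₀⟩ := hS.exists_bound_of_continuousOn hf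
  filter_upwards [eventually_ge_atTop M₀] with M hM p hp using (hM₀ p hp).trans hM

variable {E F : Type*} [NormedAddCommGroup E] [NormedSpace ℝ E] [NormedAddCommGroup F]
  [NormedSpace ℝ F]

theorem norm_smul_add_sq_smul_add_cube_smul_le (ε : ℝ) (u v w : E) :
    ‖ε • u + ε ^ 2 • v + ε ^ 3 • w‖ ≤ |ε| * ‖u‖ + |ε| ^ 2 * ‖v‖ + |ε| ^ 3 * ‖w‖ := by
  refine (norm_add₃_le ..).trans_eq ?_
  simp [norm_smul]

theorem Convex.norm_image_sub_sub_le_of_lipschitzOnWith_fderiv {f : E → F}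
    {f' : E → E →L[ℝ] F} {s : Set E} {L : ℝ≥0} (hs : Convex ℝ s)
    (hf : ∀ y ∈ s, HasFDerivWithinAt f (f' y) s y) (hf' : LipschitzOnWith L f' s) {x y : E}
    (hx : x ∈ s) (hy : y ∈ s) : ‖f y - f x - f' x (y - x)‖ ≤ L * ‖y - x‖ ^ 2 := by
  set s' := s ∩ closedBall x ‖y - x‖
  have hy' : y ∈ s' := ⟨hy, by simp [dist_eq_norm]⟩
  have hx' : x ∈ s' := ⟨hx, mem_closedBall_self (norm_nonneg _)⟩
  have bound : ∀ u ∈ s', ‖f' u - f' x‖ ≤ L * ‖y - x‖ := fun u hu => by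
    rw [← dist_eq_norm]
    exact (hf'.dist_le_mul u hu.1 x hx).trans (by gcongr; exact hu.2)
  have h := (hs.inter (convex_closedBall x _)).norm_image_sub_le_of_norm_hasFDerivWithin_le'
    (fun u hu => (hf u hu.1).mono inter_subset_left) bound hx' hy'
  rwa [mul_assoc, ← sq] at h

theorem ContinuousOn.hasDerivWithinAt_integral_Icc [CompleteSpace E] {h : ℝ → E} {a b t : ℝ}
    (hh : ContinuousOn h (Icc a b)) (ht : t ∈ Icc a b) :
    HasDerivWithinAt (fun u => ∫ s in a..u, h s) (h t) (Icc a b) t := by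
  have : Fact (t ∈ Icc a b) := ⟨ht⟩
  refine intervalIntegral.integral_hasDerivWithinAt_right
    ((hh.mono (uIcc_subset_Icc (left_mem_Icc.2 (ht.1.trans ht.2)) ht)).intervalIntegrable)
    (hh.stronglyMeasurableAtFilter_nhdsWithin measurableSet_Icc t) (hh t ht)

theorem norm_sub_sub_integral_le_of_hasDerivAt [CompleteSpace E] {x v f : ℝ → E} {T c : ℝ}
    (hx : ∀ t ∈ Icc 0 T, HasDerivAt x (v t) t) (hf : ContinuousOn f (Icc 0 T))
    (hvf : ∀ t ∈ Icc 0 T, ‖v t - f t‖ ≤ c) :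
    ∀ t ∈ Icc 0 T, ‖x t - x 0 - ∫ s in 0..t, f s‖ ≤ c * t := by
  intro t ht
  have key := norm_image_sub_le_of_norm_deriv_le_segment'
    (f := fun u => x u - ∫ s in 0..u, f s)
    (fun u hu => (hx u hu).hasDerivWithinAt.sub (hf.hasDerivWithinAt_integral_Icc hu))
    (fun u hu => hvf u (Ico_subset_Icc_self hu)) t ht
  simpa [sub_right_comm] using key

theorem IsPicardLindelof.exists_forall_mem_Icc_mem_closedBall_hasDerivWithinAt
    [CompleteSpace E] {f : ℝ → E → E} {tmin tmax : ℝ} {t₀ : Icc tmin tmax} {x₀ : E}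
    {a L K : ℝ≥0} (hf : IsPicardLindelof f t₀ x₀ a 0 L K) :
    ∃ α : ℝ → E, α t₀ = x₀ ∧ ∀ t ∈ Icc tmin tmax,
      α t ∈ closedBall x₀ a ∧ HasDerivWithinAt α (f t (α t)) (Icc tmin tmax) t := by
  obtain ⟨α, hα⟩ := ODE.FunSpace.exists_isFixedPt_next hf (mem_closedBall_self le_rfl)
  refine ⟨α.compProj, by rw [ODE.FunSpace.compProj_val, ← hα, ODE.FunSpace.next_apply₀],
    fun t ht => ⟨α.compProj_mem_closedBall hf.mul_max_le, ?_⟩⟩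
  apply ODE.hasDerivWithinAt_picard_Icc t₀.2 hf.continuousOn_uncurry
    α.continuous_compProj.continuousOn (fun _ _ => α.compProj_mem_closedBall hf.mul_max_le)
    x₀ ht |>.congr_of_mem _ ht
  intro t' ht'
  nth_rw 1 [← hα]
  rw [ODE.FunSpace.compProj_of_mem ht', ODE.FunSpace.next_apply]

/-- `G` plays the role of `F̃ (·, ·, ε)` for one fixed `ε`, and `F₁'` that of the derivative
of `F₁`. -/
structure StandardFormBounds (F₁ F₂ G : ℝ × E → E) (F₁' : ℝ × E → ℝ × E →L[ℝ] E)
    (I : Set ℝ) (B : Set E) (M : ℝ) (L : ℝ≥0) : Prop where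
  hasFDerivAt : ∀ p ∈ I ×ˢ B, HasFDerivAt F₁ (F₁' p) p
  lipschitzOnWith_fderiv : LipschitzOnWith L F₁' (I ×ˢ B)
  lipschitzOnWith₁ : LipschitzOnWith L F₁ (I ×ˢ B)
  lipschitzOnWith₂ : LipschitzOnWith L F₂ (I ×ˢ B)
  lipschitzOnWith₃ : LipschitzOnWith L G (I ×ˢ B)
  norm_le₁ : ∀ p ∈ I ×ˢ B, ‖F₁ p‖ ≤ M
  norm_le₂ : ∀ p ∈ I ×ˢ B, ‖F₂ p‖ ≤ M
  norm_le₃ : ∀ p ∈ I ×ˢ B, ‖G p‖ ≤ M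

namespace StandardFormBounds

variable {F₁ F₂ G : ℝ × E → E} {F₁' : ℝ × E → ℝ × E →L[ℝ] E} {I I' : Set ℝ} {B B' : Set E}
  {M : ℝ} {L : ℝ≥0} {t ε : ℝ} {y z : E}

theorem mono (h : StandardFormBounds F₁ F₂ G F₁' I B M L) (hI : I' ⊆ I) (hB : B' ⊆ B) :
    StandardFormBounds F₁ F₂ G F₁' I' B' M L :=
  have hs := prod_mono hI hB
  ⟨fun p hp => h.hasFDerivAt p (hs hp), h.lipschitzOnWith_fderiv.mono hs,
    h.lipschitzOnWith₁.mono hs, h.lipschitzOnWith₂.mono hs, h.lipschitzOnWith₃.mono hs,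
    fun p hp => h.norm_le₁ p (hs hp), fun p hp => h.norm_le₂ p (hs hp),
    fun p hp => h.norm_le₃ p (hs hp)⟩

theorem hasFDerivAt_slice (h : StandardFormBounds F₁ F₂ G F₁' I B M L) (ht : t ∈ I)
    (hy : y ∈ B) :
    HasFDerivAt (fun y => F₁ (t, y)) ((F₁' (t, y)).comp (.inr ℝ ℝ E)) y :=
  (h.hasFDerivAt _ ⟨ht, hy⟩).comp y (hasFDerivAt_prodMk_right t y)

theorem norm_fderiv_slice_le (h : StandardFormBounds F₁ F₂ G F₁' I B M L) (ht : t ∈ I)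
    (hB : B ∈ 𝓝 z) : ‖fderiv ℝ (fun y => F₁ (t, y)) z‖ ≤ L :=
  (h.hasFDerivAt_slice ht (mem_of_mem_nhds hB)).differentiableAt.hasFDerivAt.le_of_lipschitzOn
    hB (h.lipschitzOnWith₁.comp_prodMk_left ht)

theorem norm_sub_sub_fderiv_slice_le (h : StandardFormBounds F₁ F₂ G F₁' I B M L)
    (hB : Convex ℝ B) (ht : t ∈ I) (hz : z ∈ B) (hy : y ∈ B) :
    ‖F₁ (t, y) - F₁ (t, z) - fderiv ℝ (fun y => F₁ (t, y)) z (y - z)‖ ≤ L * ‖y - z‖ ^ 2 := by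
  rw [(h.hasFDerivAt_slice ht hz).fderiv]
  refine hB.norm_image_sub_sub_le_of_lipschitzOnWith_fderiv
    (fun y hy => (h.hasFDerivAt_slice ht hy).hasFDerivWithinAt) ?_ hz hy
  refine LipschitzOnWith.of_dist_le_mul fun y₁ h₁ y₂ h₂ => ?_
  rw [dist_eq_norm, ← ContinuousLinearMap.sub_comp]
  calc _ ≤ ‖F₁' (t, y₁) - F₁' (t, y₂)‖ * ‖ContinuousLinearMap.inr ℝ ℝ E‖ :=
        ContinuousLinearMap.opNorm_comp_le _ _
    _ ≤ ‖F₁' (t, y₁) - F₁' (t, y₂)‖ :=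
        mul_le_of_le_one_right (norm_nonneg _) (ContinuousLinearMap.norm_inr_le_one ℝ ℝ E)
    _ ≤ L * dist y₁ y₂ := by
        rw [← dist_eq_norm]
        exact (h.lipschitzOnWith_fderiv.comp_prodMk_left ht).dist_le_mul y₁ h₁ y₂ h₂

theorem norm_field_le (h : StandardFormBounds F₁ F₂ G F₁' I B M L) (hε : |ε| ≤ 1)
    {p : ℝ × E} (hp : p ∈ I ×ˢ B) : ‖ε • F₁ p + ε ^ 2 • F₂ p + ε ^ 3 • G p‖ ≤ 3 * M * |ε| := by
  have h₂ : |ε| ^ 2 ≤ |ε| := pow_le_of_le_one (abs_nonneg ε) hε two_ne_zero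
  have h₃ : |ε| ^ 3 ≤ |ε| := pow_le_of_le_one (abs_nonneg ε) hε three_ne_zero
  calc _ ≤ |ε| * ‖F₁ p‖ + |ε| ^ 2 * ‖F₂ p‖ + |ε| ^ 3 * ‖G p‖ :=
        norm_smul_add_sq_smul_add_cube_smul_le ..
    _ ≤ |ε| * M + |ε| * M + |ε| * M := by
        gcongr ?_ + ?_ + ?_
        · exact mul_le_mul_of_nonneg_left (h.norm_le₁ p hp) (abs_nonneg ε)
        · exact mul_le_mul h₂ (h.norm_le₂ p hp) (norm_nonneg _) (abs_nonneg ε)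
        · exact mul_le_mul h₃ (h.norm_le₃ p hp) (norm_nonneg _) (abs_nonneg ε)
    _ = 3 * M * |ε| := by ring

theorem lipschitzOnWith_field (h : StandardFormBounds F₁ F₂ G F₁' I B M L) (hε : |ε| ≤ 1)
    (ht : t ∈ I) :
    LipschitzOnWith (3 * L) (fun y => ε • F₁ (t, y) + ε ^ 2 • F₂ (t, y) + ε ^ 3 • G (t, y)) B := by
  refine LipschitzOnWith.of_dist_le_mul fun y₁ h₁ y₂ h₂ => ?_
  have hε₂ : |ε| ^ 2 ≤ 1 := pow_le_one₀ (abs_nonneg ε) hε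
  have hε₃ : |ε| ^ 3 ≤ 1 := pow_le_one₀ (abs_nonneg ε) hε
  have hd : ∀ {g : ℝ × E → E}, LipschitzOnWith L g (I ×ˢ B) →
      ‖g (t, y₁) - g (t, y₂)‖ ≤ L * dist y₁ y₂ := fun hg => by
    rw [← dist_eq_norm]; exact (hg.comp_prodMk_left ht).dist_le_mul y₁ h₁ y₂ h₂
  rw [dist_eq_norm]
  calc _ = ‖ε • (F₁ (t, y₁) - F₁ (t, y₂)) + ε ^ 2 • (F₂ (t, y₁) - F₂ (t, y₂)) +
          ε ^ 3 • (G (t, y₁) - G (t, y₂))‖ := by congr 1; module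
    _ ≤ |ε| * ‖F₁ (t, y₁) - F₁ (t, y₂)‖ + |ε| ^ 2 * ‖F₂ (t, y₁) - F₂ (t, y₂)‖ +
          |ε| ^ 3 * ‖G (t, y₁) - G (t, y₂)‖ := norm_smul_add_sq_smul_add_cube_smul_le ..
    _ ≤ 1 * (L * dist y₁ y₂) + 1 * (L * dist y₁ y₂) + 1 * (L * dist y₁ y₂) := by
        gcongr ?_ + ?_ + ?_
        · exact mul_le_mul hε (hd h.lipschitzOnWith₁) (norm_nonneg _) zero_le_one
        · exact mul_le_mul hε₂ (hd h.lipschitzOnWith₂) (norm_nonneg _) zero_le_one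
        · exact mul_le_mul hε₃ (hd h.lipschitzOnWith₃) (norm_nonneg _) zero_le_one
    _ = ↑(3 * L) * dist y₁ y₂ := by push_cast; ring

/-- The interval `[-1, T + 1]` makes the solution differentiable, not just one-sidedly, at `0`
and `T`. -/
theorem exists_solution [CompleteSpace E] {T δ : ℝ}
    (h : StandardFormBounds F₁ F₂ G F₁' (Icc (-1) (T + 1)) (closedBall z δ) M L)
    (hT : 0 ≤ T) (hδ : 0 ≤ δ) (hε : |ε| ≤ 1) (hεδ : 3 * M * |ε| * (T + 1) ≤ δ) :
    ∃ x : ℝ → E, x 0 = z ∧ ∀ t ∈ Icc 0 T, x t ∈ closedBall z δ ∧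
      HasDerivAt x (ε • F₁ (t, x t) + ε ^ 2 • F₂ (t, x t) + ε ^ 3 • G (t, x t)) t := by
  have h₀ : (0 : ℝ) ∈ Icc (-1) (T + 1) := ⟨by norm_num, by linarith⟩
  have hM : 0 ≤ M := (norm_nonneg _).trans (h.norm_le₁ (0, z) ⟨h₀, mem_closedBall_self hδ⟩)
  have hpl : IsPicardLindelof
      (fun t y => ε • F₁ (t, y) + ε ^ 2 • F₂ (t, y) + ε ^ 3 • G (t, y))
      (⟨0, h₀⟩ : Icc (-1 : ℝ) (T + 1)) z ⟨δ, hδ⟩ 0 ⟨3 * M * |ε|, by positivity⟩ (3 * L) :=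
    { lipschitzOnWith := fun t ht => h.lipschitzOnWith_field hε ht
      continuousOn := fun y hy => by
        have hc := ((h.lipschitzOnWith₁.continuousOn.const_smul ε).add
          (h.lipschitzOnWith₂.continuousOn.const_smul (ε ^ 2))).add
          (h.lipschitzOnWith₃.continuousOn.const_smul (ε ^ 3))
        exact hc.comp (continuous_id.prodMk continuous_const).continuousOn fun t ht => ⟨ht, hy⟩
      norm_le := fun t ht y hy => h.norm_field_le hε ⟨ht, hy⟩
      mul_max_le := by
        change 3 * M * |ε| * max (T + 1 - 0) (0 - -1) ≤ δ - 0
        rwa [max_eq_left (by linarith), sub_zero, sub_zero] }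
  obtain ⟨x, hx0, hx⟩ := hpl.exists_forall_mem_Icc_mem_closedBall_hasDerivWithinAt
  refine ⟨x, hx0, fun t ht => ?_⟩
  obtain ⟨hmem, hderiv⟩ := hx t ⟨by linarith [ht.1], by linarith [ht.2]⟩
  exact ⟨hmem, hderiv.hasDerivAt (Icc_mem_nhds (by linarith [ht.1]) (by linarith [ht.2]))⟩

section Estimates

variable [CompleteSpace E] {T δ : ℝ} {x : ℝ → E}

theorem norm_sub_le_of_solution
    (h : StandardFormBounds F₁ F₂ G F₁' (Icc 0 T) (closedBall z δ) M L) (hε : |ε| ≤ 1)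
    (hx0 : x 0 = z) (hx : ∀ t ∈ Icc 0 T, x t ∈ closedBall z δ ∧
      HasDerivAt x (ε • F₁ (t, x t) + ε ^ 2 • F₂ (t, x t) + ε ^ 3 • G (t, x t)) t) :
    ∀ t ∈ Icc 0 T, ‖x t - z‖ ≤ 3 * M * |ε| * t := by
  intro t ht
  simpa [hx0] using norm_sub_sub_integral_le_of_hasDerivAt (f := 0) (fun t ht => (hx t ht).2)
    continuousOn_const (fun t ht => by simpa using h.norm_field_le hε ⟨ht, (hx t ht).1⟩) t ht

theorem norm_sub_sub_smul_integral_le_of_solution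
    (h : StandardFormBounds F₁ F₂ G F₁' (Icc 0 T) (closedBall z δ) M L) (hε : |ε| ≤ 1)
    (hx0 : x 0 = z) (hx : ∀ t ∈ Icc 0 T, x t ∈ closedBall z δ ∧
      HasDerivAt x (ε • F₁ (t, x t) + ε ^ 2 • F₂ (t, x t) + ε ^ 3 • G (t, x t)) t) :
    ∀ t ∈ Icc 0 T, ‖x t - z - ε • ∫ s in 0..t, F₁ (s, z)‖ ≤ M * (2 + 3 * L * T) * |ε| ^ 2 * t := by
  intro t ht
  have hT : 0 ≤ T := ht.1.trans ht.2
  have hz : z ∈ closedBall z δ := hx0 ▸ (hx 0 ⟨le_rfl, hT⟩).1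
  have hM : 0 ≤ M := (norm_nonneg _).trans (h.norm_le₁ (0, z) ⟨⟨le_rfl, hT⟩, hz⟩)
  have hF₁z : ContinuousOn (fun s => ε • F₁ (s, z)) (Icc 0 T) :=
    (h.lipschitzOnWith₁.continuousOn.uncurry_right (f := curry F₁) z hz).const_smul ε
  have hpoint : ∀ s ∈ Icc 0 T,
      ‖ε • F₁ (s, x s) + ε ^ 2 • F₂ (s, x s) + ε ^ 3 • G (s, x s) - ε • F₁ (s, z)‖ ≤
        M * (2 + 3 * L * T) * |ε| ^ 2 := fun s hs => by
    obtain ⟨hxs, -⟩ := hx s hs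
    have hF₁ : ‖F₁ (s, x s) - F₁ (s, z)‖ ≤ L * (3 * M * |ε| * T) :=
      ((h.lipschitzOnWith₁.comp_prodMk_left hs).norm_sub_le hxs hz).trans <| by
        gcongr
        exact (norm_sub_le_of_solution h hε hx0 hx s hs).trans (by gcongr; exact hs.2)
    calc _ = ‖ε • (F₁ (s, x s) - F₁ (s, z)) + ε ^ 2 • F₂ (s, x s) + ε ^ 3 • G (s, x s)‖ := by
          congr 1; module
      _ ≤ |ε| * ‖F₁ (s, x s) - F₁ (s, z)‖ + |ε| ^ 2 * ‖F₂ (s, x s)‖ +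
          |ε| ^ 3 * ‖G (s, x s)‖ := norm_smul_add_sq_smul_add_cube_smul_le ..
      _ ≤ |ε| * (L * (3 * M * |ε| * T)) + |ε| ^ 2 * M + |ε| ^ 2 * M := by
          have hε₃ : |ε| ^ 3 ≤ |ε| ^ 2 := pow_le_pow_of_le_one (abs_nonneg ε) hε (by norm_num)
          gcongr ?_ + ?_ + ?_
          · gcongr
          · gcongr; exact h.norm_le₂ (s, x s) ⟨hs, hxs⟩
          · exact mul_le_mul hε₃ (h.norm_le₃ (s, x s) ⟨hs, hxs⟩) (norm_nonneg _) (by positivity)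
      _ = M * (2 + 3 * L * T) * |ε| ^ 2 := by ring
  have key := norm_sub_sub_integral_le_of_hasDerivAt (fun t ht => (hx t ht).2) hF₁z hpoint t ht
  rwa [hx0, intervalIntegral.integral_smul] at key

theorem norm_sub_second_order_le_of_solution
    (h : StandardFormBounds F₁ F₂ G F₁' (Icc 0 T) (closedBall z δ) M L) (hT : 0 ≤ T)
    (hδ : 0 < δ) (hε : |ε| ≤ 1) (hx0 : x 0 = z) (hx : ∀ t ∈ Icc 0 T, x t ∈ closedBall z δ ∧
      HasDerivAt x (ε • F₁ (t, x t) + ε ^ 2 • F₂ (t, x t) + ε ^ 3 • G (t, x t)) t) :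
    ‖x T - z - ε • (∫ t in 0..T, F₁ (t, z)) - ε ^ 2 • ∫ t in 0..T,
        (F₂ (t, z) + fderiv ℝ (fun y => F₁ (t, y)) z (∫ s in 0..t, F₁ (s, z)))‖ ≤
      M * T * (1 + 5 * L * T + 3 * L ^ 2 * T ^ 2 + 9 * L * M * T ^ 2) * |ε| ^ 3 := by
  set A : ℝ → E →L[ℝ] E := fun t => fderiv ℝ (fun y => F₁ (t, y)) z
  set w : ℝ → E := fun t => ∫ s in 0..t, F₁ (s, z)
  have hz : z ∈ closedBall z δ := mem_closedBall_self hδ.le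
  have hM : 0 ≤ M := (norm_nonneg _).trans (h.norm_le₁ (0, z) ⟨⟨le_rfl, hT⟩, hz⟩)
  have hF₁z : ContinuousOn (fun t => F₁ (t, z)) (Icc 0 T) :=
    h.lipschitzOnWith₁.continuousOn.uncurry_right (f := curry F₁) z hz
  have hF₂z : ContinuousOn (fun t => F₂ (t, z)) (Icc 0 T) :=
    h.lipschitzOnWith₂.continuousOn.uncurry_right (f := curry F₂) z hz
  have hA : ContinuousOn A (Icc 0 T) :=
    ((h.lipschitzOnWith_fderiv.continuousOn.uncurry_right (f := curry F₁') z hz).clm_comp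
      continuousOn_const).congr fun t ht => (h.hasFDerivAt_slice ht hz).fderiv
  have hw : ContinuousOn w (Icc 0 T) := fun t ht =>
    (hF₁z.hasDerivWithinAt_integral_Icc ht).continuousWithinAt
  have hp : ContinuousOn (fun t => ε • F₁ (t, z)) (Icc 0 T) := hF₁z.const_smul ε
  have hq : ContinuousOn (fun t => ε ^ 2 • (F₂ (t, z) + A t (w t))) (Icc 0 T) :=
    (hF₂z.add (hA.clm_apply hw)).const_smul _
  have hpoint : ∀ s ∈ Icc 0 T,
      ‖ε • F₁ (s, x s) + ε ^ 2 • F₂ (s, x s) + ε ^ 3 • G (s, x s) -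
          (ε • F₁ (s, z) + ε ^ 2 • (F₂ (s, z) + A s (w s)))‖ ≤
        M * (1 + 5 * L * T + 3 * L ^ 2 * T ^ 2 + 9 * L * M * T ^ 2) * |ε| ^ 3 := fun s hs => by
    obtain ⟨hxs, -⟩ := hx s hs
    have h₀ : ‖x s - z‖ ≤ 3 * M * |ε| * T :=
      (norm_sub_le_of_solution h hε hx0 hx s hs).trans (by gcongr; exact hs.2)
    have h₁ : ‖x s - z - ε • w s‖ ≤ M * (2 + 3 * L * T) * |ε| ^ 2 * T :=
      (norm_sub_sub_smul_integral_le_of_solution h hε hx0 hx s hs).trans (by gcongr; exact hs.2)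
    have e₁ : ‖F₁ (s, x s) - F₁ (s, z) - A s (x s - z) + A s (x s - z - ε • w s)‖ ≤
        L * (3 * M * |ε| * T) ^ 2 + L * (M * (2 + 3 * L * T) * |ε| ^ 2 * T) :=
      (norm_add_le _ _).trans <| add_le_add
        ((h.norm_sub_sub_fderiv_slice_le (convex_closedBall z δ) hs hz hxs).trans (by gcongr))
        (((A s).le_of_opNorm_le (h.norm_fderiv_slice_le hs (closedBall_mem_nhds z hδ)) _).trans
          (by gcongr))
    have e₂ : ‖F₂ (s, x s) - F₂ (s, z)‖ ≤ L * (3 * M * |ε| * T) :=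
      ((h.lipschitzOnWith₂.comp_prodMk_left hs).norm_sub_le hxs hz).trans (by gcongr)
    have e₃ : ‖G (s, x s)‖ ≤ M := h.norm_le₃ (s, x s) ⟨hs, hxs⟩
    -- Taylor remainder of `F₁` at `z`, plus the error of the first-order approximation `ε w s`.
    calc _ = ‖ε • (F₁ (s, x s) - F₁ (s, z) - A s (x s - z) + A s (x s - z - ε • w s)) +
          ε ^ 2 • (F₂ (s, x s) - F₂ (s, z)) + ε ^ 3 • G (s, x s)‖ := by
          congr 1; simp only [map_sub, map_smul]; module
      _ ≤ |ε| * ‖F₁ (s, x s) - F₁ (s, z) - A s (x s - z) + A s (x s - z - ε • w s)‖ +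
          |ε| ^ 2 * ‖F₂ (s, x s) - F₂ (s, z)‖ + |ε| ^ 3 * ‖G (s, x s)‖ :=
          norm_smul_add_sq_smul_add_cube_smul_le ..
      _ ≤ |ε| * (L * (3 * M * |ε| * T) ^ 2 + L * (M * (2 + 3 * L * T) * |ε| ^ 2 * T)) +
          |ε| ^ 2 * (L * (3 * M * |ε| * T)) + |ε| ^ 3 * M := by gcongr
      _ = _ := by ring
  have key := norm_sub_sub_integral_le_of_hasDerivAt (fun t ht => (hx t ht).2) (hp.add hq) hpoint
    T ⟨hT, le_rfl⟩
  simp only [Pi.add_apply] at key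
  rw [hx0, intervalIntegral.integral_add (hp.intervalIntegrable_of_Icc hT)
    (hq.intervalIntegrable_of_Icc hT), intervalIntegral.integral_smul,
    intervalIntegral.integral_smul, ← sub_sub] at key
  exact key.trans_eq (by ring)

end Estimates

end StandardFormBounds

theorem exists_standardFormBounds {F₁ F₂ : ℝ × E → E} {Ft : ℝ × E × ℝ → E} {D : Set E}
    {W : Set ℝ} (hD : IsOpen D) (hW : IsOpen W) (hF₁ : ContDiffOn ℝ 2 F₁ (univ ×ˢ D))
    (hF₂ : ContDiffOn ℝ 1 F₂ (univ ×ˢ D)) (hFt : ContDiffOn ℝ 1 Ft (univ ×ˢ D ×ˢ W))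
    {I J : Set ℝ} {K : Set E} (hI : IsCompact I) (hK : IsCompact K) (hKD : K ⊆ D)
    (hJ : IsCompact J) (hJW : J ⊆ W) :
    ∃ M > 0, ∃ L, ∀ ε ∈ J,
      StandardFormBounds F₁ F₂ (fun p => Ft (p.1, p.2, ε)) (fderiv ℝ F₁) I K M L := by
  have hU : IsOpen ((univ : Set ℝ) ×ˢ D) := isOpen_univ.prod hD
  have hU' : IsOpen ((univ : Set ℝ) ×ˢ D ×ˢ W) := isOpen_univ.prod (hD.prod hW)
  have hS : IsCompact (I ×ˢ K) := hI.prod hK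
  have hS' : IsCompact (I ×ˢ K ×ˢ J) := hI.prod (hK.prod hJ)
  have hSU : I ×ˢ K ⊆ univ ×ˢ D := prod_mono (subset_univ I) hKD
  have hSU' : I ×ˢ K ×ˢ J ⊆ univ ×ˢ D ×ˢ W := prod_mono (subset_univ I) (prod_mono hKD hJW)
  have hF₁' : ContDiffOn ℝ 1 (fderiv ℝ F₁) (univ ×ˢ D) := hF₁.fderiv_of_isOpen hU (by norm_num)
  obtain ⟨M, hM, hM₁, hM₂, hMt⟩ := ((eventually_gt_atTop (0 : ℝ)).and <|
    (hS.eventually_forall_norm_le (hF₁.continuousOn.mono hSU)).and <|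
    (hS.eventually_forall_norm_le (hF₂.continuousOn.mono hSU)).and <|
    hS'.eventually_forall_norm_le (hFt.continuousOn.mono hSU')).exists
  obtain ⟨L, hL', hL₁, hL₂, hLt⟩ := ((hF₁'.eventually_lipschitzOnWith hU hS hSU).and <|
    ((hF₁.of_le one_le_two).eventually_lipschitzOnWith hU hS hSU).and <|
    (hF₂.eventually_lipschitzOnWith hU hS hSU).and <|
    hFt.eventually_lipschitzOnWith hU' hS' hSU').exists
  refine ⟨M, hM, L, fun ε hε => ⟨fun p hp => ?_, hL', hL₁, hL₂, ?_, hM₁, hM₂,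
    fun p hp => hMt _ ⟨hp.1, hp.2, hε⟩⟩⟩
  · exact ((hF₁.differentiableOn two_ne_zero).differentiableAt
      (hU.mem_nhds (hSU hp))).hasFDerivAt
  · have h := hLt.comp (isometry_prodMk_assoc_const ε).lipschitz.lipschitzOnWith
      fun p (hp : p ∈ I ×ˢ K) => ⟨hp.1, hp.2, hε⟩
    rwa [mul_one] at h

theorem stmt_9_general (T : ℝ) (hT : 0 < T)
    (D : Set (ℝ × ℝ)) (hDopen : IsOpen D)
    (ε₀ : ℝ) (hε₀ : 0 < ε₀)
    (F₁ F₂ : ℝ × (ℝ × ℝ) → ℝ × ℝ)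
    (Ft : ℝ × (ℝ × ℝ) × ℝ → ℝ × ℝ)
    (hF₁ : ContDiffOn ℝ 2 F₁ (Set.univ ×ˢ D))
    (hF₂ : ContDiffOn ℝ 2 F₂ (Set.univ ×ˢ D))
    (hFt : ContDiffOn ℝ 2 Ft (Set.univ ×ˢ D ×ˢ Set.Ioo (-ε₀) ε₀))
    (f₁ f₂ : ℝ × ℝ → ℝ × ℝ)
    (hf₁ : ∀ z, f₁ z = ∫ t in (0:ℝ)..T, F₁ (t, z))
    (hf₂ : ∀ z, f₂ z = ∫ t in (0:ℝ)..T,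
      (F₂ (t, z) + fderiv ℝ (fun y => F₁ (t, y)) z (∫ s in (0:ℝ)..t, F₁ (s, z))))
    (K : Set (ℝ × ℝ)) (hK : IsCompact K) (hKD : K ⊆ D) :
    ∃ C : ℝ, 0 < C ∧ ∃ ε₁ ∈ Set.Ioo (0:ℝ) ε₀, ∀ z ∈ K, ∀ ε : ℝ, |ε| < ε₁ →
      ∃ x : ℝ → ℝ × ℝ, x 0 = z ∧
        (∀ t ∈ Set.Icc (0:ℝ) T, x t ∈ D) ∧
        (∀ t ∈ Set.Icc (0:ℝ) T,
          HasDerivAt x (ε • F₁ (t, x t) + ε^2 • F₂ (t, x t) + ε^3 • Ft (t, x t, ε)) t) ∧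
        ‖x T - z - ε • f₁ z - ε^2 • f₂ z‖ ≤ C * |ε|^3 := by
  obtain ⟨δ, hδ, hKδ⟩ := hK.exists_cthickening_subset_open hDopen hKD
  obtain ⟨M, hM, L, hbounds⟩ := exists_standardFormBounds (I := Icc (-1) (T + 1))
    (J := Icc (-(ε₀ / 2)) (ε₀ / 2)) hDopen isOpen_Ioo hF₁ (hF₂.of_le one_le_two)
    (hFt.of_le one_le_two) isCompact_Icc hK.cthickening hKδ isCompact_Icc
    (Icc_subset_Ioo (by linarith) (by linarith))
  set ε₁ := min (ε₀ / 2) (min 1 (δ / (3 * M * (T + 1))))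
  refine ⟨M * T * (1 + 5 * L * T + 3 * L ^ 2 * T ^ 2 + 9 * L * M * T ^ 2), by positivity, ε₁,
    ⟨by positivity, (min_le_left _ _).trans_lt (half_lt_self hε₀)⟩, fun z hz ε hε => ?_⟩
  have hε₀' : |ε| ≤ ε₀ / 2 := hε.le.trans (min_le_left _ _)
  have hε1 : |ε| ≤ 1 := hε.le.trans ((min_le_right _ _).trans (min_le_left _ _))
  have hεδ : 3 * M * |ε| * (T + 1) ≤ δ := by
    have h := hε.le.trans ((min_le_right _ _).trans (min_le_right _ _))
    rw [le_div_iff₀ (by positivity)] at h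
    linarith
  have hball := closedBall_subset_cthickening hz δ
  have hzb := (hbounds ε (abs_le.1 hε₀')).mono subset_rfl hball
  obtain ⟨x, hx0, hx⟩ := hzb.exists_solution hT.le hδ.le hε1 hεδ
  refine ⟨x, hx0, fun t ht => hKδ (hball (hx t ht).1), fun t ht => (hx t ht).2, ?_⟩
  rw [hf₁, hf₂]
  exact (hzb.mono (Icc_subset_Icc (by norm_num) (by linarith)) subset_rfl
    ).norm_sub_second_order_le_of_solution hT.le hδ hε1 hx0 hx

/-- Second-order expansion of the time-`T` (Poincaré) map of a
`T`-periodic system in the standard form of averaging theory: for `z` in a compact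
subset `K` of the open bounded domain `D ⊂ ℝ²` and `|ε|` small, the solution of
`x' = εF₁(t,x) + ε²F₂(t,x) + ε³F̃(t,x,ε)`, `x(0) = z`, exists on `[0,T]`, stays in `D`,
and satisfies `‖x(T) - z - εf₁(z) - ε²f₂(z)‖ ≤ C|ε|³`, where `f₁, f₂` are the first-
and second-order Melnikov functions. -/
theorem stmt_9 (T : ℝ) (hT : 0 < T)
    (D : Set (ℝ × ℝ)) (hDopen : IsOpen D) (hDbdd : Bornology.IsBounded D)
    (ε₀ : ℝ) (hε₀ : 0 < ε₀)
    (F₁ F₂ : ℝ × (ℝ × ℝ) → ℝ × ℝ)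
    (Ft : ℝ × (ℝ × ℝ) × ℝ → ℝ × ℝ)
    (hF₁ : ContDiffOn ℝ 2 F₁ (Set.univ ×ˢ D))
    (hF₂ : ContDiffOn ℝ 2 F₂ (Set.univ ×ˢ D))
    (hFt : ContDiffOn ℝ 2 Ft (Set.univ ×ˢ D ×ˢ Set.Ioo (-ε₀) ε₀))
    (hper₁ : ∀ t x, F₁ (t + T, x) = F₁ (t, x))
    (hper₂ : ∀ t x, F₂ (t + T, x) = F₂ (t, x))
    (hpert : ∀ t x ε, Ft (t + T, x, ε) = Ft (t, x, ε))
    (f₁ f₂ : ℝ × ℝ → ℝ × ℝ)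
    (hf₁ : ∀ z, f₁ z = ∫ t in (0:ℝ)..T, F₁ (t, z))
    (hf₂ : ∀ z, f₂ z = ∫ t in (0:ℝ)..T,
      (F₂ (t, z) + fderiv ℝ (fun y => F₁ (t, y)) z (∫ s in (0:ℝ)..t, F₁ (s, z))))
    (K : Set (ℝ × ℝ)) (hK : IsCompact K) (hKD : K ⊆ D) :
    ∃ C : ℝ, 0 < C ∧ ∃ ε₁ ∈ Set.Ioo (0:ℝ) ε₀, ∀ z ∈ K, ∀ ε : ℝ, |ε| < ε₁ →
      ∃ x : ℝ → ℝ × ℝ, x 0 = z ∧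
        (∀ t ∈ Set.Icc (0:ℝ) T, x t ∈ D) ∧
        (∀ t ∈ Set.Icc (0:ℝ) T,
          HasDerivAt x (ε • F₁ (t, x t) + ε^2 • F₂ (t, x t) + ε^3 • Ft (t, x t, ε)) t) ∧
        ‖x T - z - ε • f₁ z - ε^2 • f₂ z‖ ≤ C * |ε|^3 :=
  stmt_9_general T hT D hDopen ε₀ hε₀ F₁ F₂ Ft hF₁ hF₂ hFt f₁ f₂ hf₁ hf₂ K hK hKD
end
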